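/- arXiv:2501.17566 — 11 statements merged into one kernel-verified Lean document; each statement's English description precedes it below -/
import Mathlib

section
/- Let p ≥ 1 and let m ≥ n ≥ 1 be integers. Then 2 ≤ n^{−1/p} ‖T_n‖_p ≤ m^{−1/p} ‖T_m‖_p; that is, the sequence n ↦ n^{−1/p} ‖T_n‖_p is nondecreasing and bounded below by 2 = ‖T_1‖_p. -/
open Finset Real Filter

/-- The n×n Cauchy–Toeplitz matrix `T_n = [2/(1+2(i-j))]`. -/
noncomputable def cauchyToeplitz (n : ℕ) : Matrix (Fin n) (Fin n) ℝ :=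
  fun i j => 2 / (1 + 2 * (((i : ℕ) : ℝ) - ((j : ℕ) : ℝ)))

/-- The ℓ_p norm of `T_n`: `(∑_{i,j} |a_{ij}|^p)^(1/p)`. -/
noncomputable def lpNorm (n : ℕ) (p : ℝ) : ℝ :=
  (∑ i : Fin n, ∑ j : Fin n, |cauchyToeplitz n i j| ^ p) ^ (1 / p)

/-- The ℓ_{p,q} norm of `T_n`: `(∑_j (∑_i |a_{ij}|^p)^(q/p))^(1/q)`. -/
noncomputable def lpqNorm (n : ℕ) (p q : ℝ) : ℝ :=
  (∑ j : Fin n, (∑ i : Fin n, |cauchyToeplitz n i j| ^ p) ^ (q / p)) ^ (1 / q)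

/-- The Riemann zeta function at a real argument (real-valued for real `p > 1`). -/
noncomputable def zetaR (p : ℝ) : ℝ := (riemannZeta p).re

/-!
Write `S_n = ∑_{i,j<n} f(i - j)` for the sum of the entries of an `n × n` Toeplitz matrix with
nonnegative symbol `f`; for `f(d) = |2/(1+2d)|^p` this is `‖T_n‖_p^p`. Passing from `n` to `n + 1`
adds a new last row and column, whose entries together are exactly `f(d)` for `-n ≤ d ≤ n`, each
once; call this sum `R_n`. Every row of the `n × n` matrix takes its values among these `f(d)`,
so `S_n ≤ n R_n`, and hence the mediant `S_{n+1}/(n+1) = (S_n + R_n)/(n+1)` is at least `S_n/n`.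
Thus `S_n/n` increases from `S_1 = f(0) = 2^p`, and taking `p`-th roots gives the theorem.
-/

lemma sum_range_add_eq_sum_Ico {M : Type*} [AddCommMonoid M] (g : ℤ → M) (a : ℤ) (N : ℕ) :
    ∑ k ∈ range N, g (a + k) = ∑ d ∈ Ico a (a + N), g d :=
  sum_nbij' (fun k => a + k) (fun d => (d - a).toNat)
    (by intro k hk; simp at hk ⊢; omega) (by intro d hd; simp at hd ⊢; omega)
    (by intro k _; simp) (by intro d hd; simp at hd ⊢; omega) (fun _ _ => rfl)

lemma sum_range_sub_eq_sum_Ioc {M : Type*} [AddCommMonoid M] (g : ℤ → M) (a : ℤ) (N : ℕ) :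
    ∑ j ∈ range N, g (a - j) = ∑ d ∈ Ioc (a - N) a, g d :=
  sum_nbij' (fun j => a - j) (fun d => (a - d).toNat)
    (by intro j hj; simp at hj ⊢; omega) (by intro d hd; simp at hd ⊢; omega)
    (by intro j _; simp) (by intro d hd; simp at hd ⊢; omega) (fun _ _ => rfl)

section ToeplitzSum

variable (f : ℤ → ℝ)

noncomputable def toeplitzSum (n : ℕ) : ℝ :=
  ∑ i ∈ range n, ∑ j ∈ range n, f (i - j)

lemma toeplitzSum_succ (n : ℕ) :
    toeplitzSum f (n + 1) = toeplitzSum f n + ∑ d ∈ Ico (-n : ℤ) (n + 1), f d := by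
  have hcol : ∑ i ∈ range n, f (i - n) = ∑ d ∈ Ico (-n : ℤ) 0, f d := by
    simpa [neg_add_eq_sub] using sum_range_add_eq_sum_Ico f (-n) n
  have hrow : ∑ j ∈ range (n + 1), f (n - j) = ∑ d ∈ Ico (0 : ℤ) (n + 1), f d := by
    rw [sum_range_sub_eq_sum_Ioc]
    congr 1
    ext d
    simp only [mem_Ioc, mem_Ico]
    omega
  have hsplit : ∑ d ∈ Ico (-n : ℤ) (n + 1), f d
      = ∑ d ∈ Ico (-n : ℤ) 0, f d + ∑ d ∈ Ico (0 : ℤ) (n + 1), f d := by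
    rw [← sum_union (Ico_disjoint_Ico_consecutive _ _ _),
      Ico_union_Ico_eq_Ico (by omega) (by omega)]
  rw [toeplitzSum, sum_range_succ, hrow]
  simp only [sum_range_succ (n := n), sum_add_distrib]
  rw [hcol, hsplit, toeplitzSum]
  ring

variable {f}

lemma toeplitzSum_nonneg (hf : 0 ≤ f) (n : ℕ) : 0 ≤ toeplitzSum f n :=
  sum_nonneg fun _ _ => sum_nonneg fun _ _ => hf _

lemma toeplitzSum_le_mul (hf : 0 ≤ f) (n : ℕ) :
    toeplitzSum f n ≤ n * ∑ d ∈ Ico (-n : ℤ) (n + 1), f d := by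
  have hrow : ∀ i ∈ range n,
      ∑ j ∈ range n, f (i - j) ≤ ∑ d ∈ Ico (-n : ℤ) (n + 1), f d := by
    intro i hi
    rw [sum_range_sub_eq_sum_Ioc]
    refine sum_le_sum_of_subset_of_nonneg (fun d hd => ?_) fun d _ _ => hf d
    simp only [mem_Ioc, mem_Ico, mem_range] at hi hd ⊢
    omega
  simpa [toeplitzSum] using sum_le_sum hrow

theorem monotone_toeplitzSum_div (hf : 0 ≤ f) : Monotone fun n : ℕ => toeplitzSum f n / n := by
  refine monotone_nat_of_le_succ fun n => ?_
  rcases Nat.eq_zero_or_pos n with rfl | hn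
  · simpa using toeplitzSum_nonneg hf 1
  replace hn : (0 : ℝ) < n := by exact_mod_cast hn
  have hS := toeplitzSum_le_mul hf n
  rw [Nat.cast_succ, toeplitzSum_succ, div_le_div_iff₀ hn (by positivity)]
  nlinarith

end ToeplitzSum

noncomputable def cauchyWeight (p : ℝ) (d : ℤ) : ℝ := |2 / (1 + 2 * (d : ℝ))| ^ p

lemma cauchyWeight_nonneg (p : ℝ) : 0 ≤ cauchyWeight p :=
  fun _ => Real.rpow_nonneg (abs_nonneg _) p

lemma lpNorm_eq_toeplitzSum (n : ℕ) (p : ℝ) :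
    lpNorm n p = toeplitzSum (cauchyWeight p) n ^ (1 / p) := by
  simp only [lpNorm, toeplitzSum, cauchyWeight, cauchyToeplitz, sum_range]
  push_cast
  rfl

theorem stmt_1 (p : ℝ) (hp : 1 ≤ p) (m n : ℕ) (hn : 1 ≤ n) (hmn : n ≤ m) :
    2 ≤ (n : ℝ) ^ (-(1 / p)) * lpNorm n p ∧
      (n : ℝ) ^ (-(1 / p)) * lpNorm n p ≤ (m : ℝ) ^ (-(1 / p)) * lpNorm m p := by
  set S := toeplitzSum (cauchyWeight p)
  have hmono := monotone_toeplitzSum_div (cauchyWeight_nonneg p)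
  have hroot : ∀ k : ℕ, (k : ℝ) ^ (-(1 / p)) * lpNorm k p = (S k / k) ^ (1 / p) := fun k => by
    rw [lpNorm_eq_toeplitzSum, Real.div_rpow (toeplitzSum_nonneg (cauchyWeight_nonneg p) k)
      k.cast_nonneg, Real.rpow_neg k.cast_nonneg, inv_mul_eq_div]
  have hS1 : S 1 / (1 : ℕ) = 2 ^ p := by simp [S, toeplitzSum, cauchyWeight]
  have hSnn : ∀ k : ℕ, 0 ≤ S k / k :=
    fun k => div_nonneg (toeplitzSum_nonneg (cauchyWeight_nonneg p) k) k.cast_nonneg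
  have hexp : 0 ≤ 1 / p := by positivity
  rw [hroot, hroot]
  constructor
  · calc (2 : ℝ) = ((2 : ℝ) ^ p) ^ p⁻¹ := (Real.rpow_rpow_inv zero_le_two (by positivity)).symm
      _ ≤ (S n / n) ^ (1 / p) := by
        rw [← one_div, ← hS1]
        exact Real.rpow_le_rpow (hSnn 1) (hmono hn) hexp
  · exact Real.rpow_le_rpow (hSnn n) (hmono hmn) hexp
end

section
/- Let p > 1 and n ≥ 2. Then [(1 + 2/n²)(2^p − 1)ζ(p) − C′(n,p)]^{1/p} < n^{−1/p} ‖T_n‖_p < (2 − 1/n)^{1/p} [(2^p − 1)ζ(p) − C″(n,p)]^{1/p}, where C′(n,p) = (n² + 2)/((p − 1) n^{p+1}) + 2^{p+1}/(n (2n − 1)^p) and C″(n,p) = 2^{p−1}/((p − 1)(2n + 1)^{p−1}). -/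
open Finset Real Filter

/-!
Write `u k = (2k+1)^(-p)`. Then `|t_ij|^p = 2^p u (i-j)` for `j ≤ i` and `2^p u (j-i-1)` for
`i < j`, so `‖T_n‖_p^p = 2^p ∑_{k<n} (2(n-k)-1) u k`, while `∑_k u k = (1 - 2^(-p)) ζ(p)`.
The upper bound follows from `2(n-k)-1 ≤ 2n-1` together with the lower estimate
`(2n+1)^(1-p) / (2(p-1))` for the tail `∑_{k≥n} u k`. For the lower bound, Abel summation
against the decreasing `u k` gives
`n ∑_{k<n} (2(n-k)-1) u k ≥ (n²+2) ∑_{k<n} u k - 2n u (n-1)`, and the tail is at most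
`(2n)^(1-p) / (2(p-1))`, strictly by the midpoint inequality for the convex function
`x ↦ x^(-p)`. Both tail estimates telescope the differences of `x ↦ x^(1-p)`.
-/

lemma lt_of_hasDerivAt_pos {f f' : ℝ → ℝ} {a b : ℝ} (hab : a < b)
    (hf : ∀ t ∈ Set.Icc a b, HasDerivAt f (f' t) t) (hf' : ∀ t ∈ Set.Ioo a b, 0 < f' t) :
    f a < f b := by
  refine strictMonoOn_of_hasDerivWithinAt_pos (f' := f') (convex_Icc a b)
    (fun t ht => (hf t ht).continuousAt.continuousWithinAt) (fun t ht => ?_) (fun t ht => ?_)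
    (Set.left_mem_Icc.2 hab.le) (Set.right_mem_Icc.2 hab.le) hab
  · rw [interior_Icc] at ht
    exact (hf t (Set.Ioo_subset_Icc_self ht)).hasDerivWithinAt
  · rw [interior_Icc] at ht
    exact hf' t ht

lemma hasDerivAt_add_mul_rpow (q c s t : ℝ) (h : c + s * t ≠ 0) :
    HasDerivAt (fun t => (c + s * t) ^ q) (s * q * (c + s * t) ^ (q - 1)) t := by
  have hlin : HasDerivAt (fun t => c + s * t) s t := by
    simpa using ((hasDerivAt_id t).const_mul s).const_add c
  exact hlin.rpow_const (Or.inl h)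

lemma hasSum_sub_succ_of_antitone {F : ℕ → ℝ} (hF : Antitone F)
    (hF0 : Tendsto F atTop (nhds 0)) : HasSum (fun k => F k - F (k + 1)) (F 0) := by
  rw [hasSum_iff_tendsto_nat_of_nonneg (fun k => sub_nonneg.2 (hF k.le_succ))]
  simp_rw [sum_range_sub']
  simpa using tendsto_const_nhds.sub hF0

lemma mul_sum_range_le_sum_range_mul_of_antitone {R : Type*} [Semiring R] [PartialOrder R]
    [IsOrderedRing R] {u g : ℕ → R} (hu : Antitone u) {n : ℕ}
    (hg : ∀ m ≤ n, 0 ≤ ∑ k ∈ range m, g k) :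
    u n * ∑ k ∈ range (n + 1), g k ≤ ∑ k ∈ range (n + 1), u k * g k := by
  induction n with
  | zero => simp
  | succ n ih =>
    have hshift : u (n + 1) * ∑ k ∈ range (n + 1), g k ≤ u n * ∑ k ∈ range (n + 1), g k :=
      mul_le_mul_of_nonneg_right (hu n.le_succ) (hg (n + 1) (by omega))
    rw [sum_range_succ g (n + 1), sum_range_succ (fun k => u k * g k) (n + 1), mul_add]
    exact add_le_add (hshift.trans (ih fun m hm => hg m (by omega))) le_rfl

section RpowBounds

variable {p : ℝ}

lemma rpow_one_sub_sub_rpow_one_sub_lt (hp : 1 < p) {a h : ℝ} (ha : 0 < a) (hh : 0 < h) :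
    a ^ (1 - p) - (a + h) ^ (1 - p) < (p - 1) * a ^ (-p) * h := by
  have key := lt_of_hasDerivAt_pos (f := fun t => (a + 1 * t) ^ (1 - p) + (p - 1) * a ^ (-p) * t)
    (f' := fun t => 1 * (1 - p) * (a + 1 * t) ^ (1 - p - 1) + (p - 1) * a ^ (-p)) hh
    (fun t ht => (hasDerivAt_add_mul_rpow _ _ _ t (by linarith [ht.1])).add
      ((hasDerivAt_id t).const_mul _ |>.congr_deriv (mul_one _)))
    (fun t ht => by
      have hdec : (a + 1 * t) ^ (-p) < a ^ (-p) :=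
        Real.rpow_lt_rpow_of_neg ha (by linarith [ht.1]) (by linarith)
      have := mul_pos (sub_pos.2 hp) (sub_pos.2 hdec)
      simp only [show 1 - p - 1 = -p by ring]
      linarith)
  simp only [one_mul, mul_zero, add_zero] at key
  linarith

lemma two_mul_rpow_neg_lt_add (hp : 0 < p) {m t : ℝ} (ht : 0 < t) (htm : t < m) :
    2 * m ^ (-p) < (m - t) ^ (-p) + (m + t) ^ (-p) := by
  have hx : 0 < m - t := by linarith
  have hy : 0 < m + t := by linarith
  have hxy : (m - t) ^ (-p / 2) * (m + t) ^ (-p / 2) = ((m - t) * (m + t)) ^ (-p / 2) :=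
    (Real.mul_rpow hx.le hy.le).symm
  have hsq : ∀ x : ℝ, 0 < x → x ^ (-p / 2) * x ^ (-p / 2) = x ^ (-p) := fun x hx => by
    rw [← Real.rpow_add hx]; ring_nf
  have hm : m ^ (-p) = (m ^ 2) ^ (-p / 2) := by
    rw [← Real.rpow_natCast, ← Real.rpow_mul (by linarith)]; ring_nf
  have hlt : (m ^ 2) ^ (-p / 2) < ((m - t) * (m + t)) ^ (-p / 2) :=
    Real.rpow_lt_rpow_of_neg (by positivity) (by nlinarith) (by linarith)
  calc 2 * m ^ (-p) < 2 * ((m - t) ^ (-p / 2) * (m + t) ^ (-p / 2)) := by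
        rw [hm, hxy]; linarith
    _ ≤ (m - t) ^ (-p / 2) * (m - t) ^ (-p / 2) + (m + t) ^ (-p / 2) * (m + t) ^ (-p / 2) := by
        nlinarith [sq_nonneg ((m - t) ^ (-p / 2) - (m + t) ^ (-p / 2))]
    _ = (m - t) ^ (-p) + (m + t) ^ (-p) := by rw [hsq _ hx, hsq _ hy]

lemma mul_rpow_neg_lt_rpow_one_sub_sub (hp : 1 < p) {m : ℝ} (hm : 1 < m) :
    2 * (p - 1) * m ^ (-p) < (m - 1) ^ (1 - p) - (m + 1) ^ (1 - p) := by
  have key := lt_of_hasDerivAt_pos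
    (f := fun t => (m + -1 * t) ^ (1 - p) - (m + 1 * t) ^ (1 - p) - 2 * (p - 1) * m ^ (-p) * t)
    (f' := fun t => -1 * (1 - p) * (m + -1 * t) ^ (1 - p - 1) -
      1 * (1 - p) * (m + 1 * t) ^ (1 - p - 1) - 2 * (p - 1) * m ^ (-p)) one_pos
    (fun t ht => ((hasDerivAt_add_mul_rpow _ _ _ t (by linarith [ht.2])).sub
      (hasDerivAt_add_mul_rpow _ _ _ t (by linarith [ht.1]))).sub
      ((hasDerivAt_id t).const_mul _ |>.congr_deriv (mul_one _)))
    (fun t ht => by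
      have hconv := two_mul_rpow_neg_lt_add (p := p) (by linarith) ht.1 (ht.2.trans hm)
      have := mul_pos (sub_pos.2 hp) (sub_pos.2 hconv)
      simp only [show 1 - p - 1 = -p by ring, ← sub_eq_add_neg, neg_one_mul, one_mul]
      linarith)
  simp only [mul_zero, add_zero, sub_zero, mul_one, ← sub_eq_add_neg] at key
  linarith

end RpowBounds

/-- `∫_{(a-1)/2}^∞ (2x+1)^(-p) dx`, to which the tails of `∑ (2k+1)^(-p)` are compared. -/
noncomputable def tailBound (p a : ℝ) : ℝ := a ^ (1 - p) / (2 * (p - 1))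

section TailBounds

variable {p a : ℝ}

lemma summable_add_two_mul_rpow_neg (hp : 1 < p) (ha : 0 ≤ a) :
    Summable fun k : ℕ => (a + 2 * k) ^ (-p) := by
  refine ((Real.summable_one_div_nat_add_rpow (a / 2) p).mpr hp).mul_left (2 ^ (-p)) |>.congr
    fun k => ?_
  have hk : 0 ≤ (k : ℝ) + a / 2 := by positivity
  rw [abs_of_nonneg hk, one_div, ← Real.rpow_neg hk, ← Real.mul_rpow zero_le_two hk]
  ring_nf

lemma tailBound_sub_tailBound_lt (hp : 1 < p) {h : ℝ} (ha : 0 < a) (hh : 0 < h) :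
    tailBound p a - tailBound p (a + h) < a ^ (-p) * h / 2 := by
  have := rpow_one_sub_sub_rpow_one_sub_lt hp ha hh
  rw [tailBound, tailBound, div_sub_div_same, div_lt_iff₀ (by linarith)]
  linarith

lemma rpow_neg_lt_tailBound_sub_tailBound (hp : 1 < p) (ha : 0 < a) :
    (a + 1) ^ (-p) < tailBound p a - tailBound p (a + 2) := by
  have := mul_rpow_neg_lt_rpow_one_sub_sub hp (m := a + 1) (by linarith)
  rw [tailBound, tailBound, div_sub_div_same, lt_div_iff₀ (by linarith)]
  ring_nf at this ⊢
  linarith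

lemma hasSum_tailBound_sub (hp : 1 < p) (ha : 0 < a) :
    HasSum (fun k : ℕ => tailBound p (a + 2 * k) - tailBound p (a + 2 * k + 2))
      (tailBound p a) := by
  have hanti : Antitone fun k : ℕ => tailBound p (a + 2 * k) := fun k l hkl =>
    div_le_div_of_nonneg_right
      (Real.rpow_le_rpow_of_nonpos (by positivity) (by gcongr) (by linarith)) (by linarith)
  have hlim : Tendsto (fun k : ℕ => tailBound p (a + 2 * k)) atTop (nhds 0) := by
    have hbase : Tendsto (fun k : ℕ => a + 2 * (k : ℝ)) atTop atTop :=
      tendsto_atTop_add_const_left _ a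
        (tendsto_natCast_atTop_atTop.const_mul_atTop two_pos)
    have hpow := (tendsto_rpow_neg_atTop (y := p - 1) (by linarith)).comp hbase
    rw [neg_sub] at hpow
    simpa [tailBound] using hpow.div_const (2 * (p - 1))
  convert hasSum_sub_succ_of_antitone hanti hlim using 1
  · funext k; push_cast; ring_nf
  · simp

lemma tailBound_le_tsum (hp : 1 < p) (ha : 0 < a) :
    tailBound p a ≤ ∑' k : ℕ, (a + 2 * k) ^ (-p) :=
  hasSum_le (fun k => by
      have := tailBound_sub_tailBound_lt hp (a := a + 2 * k) (h := 2) (by positivity) two_pos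
      linarith)
    (hasSum_tailBound_sub hp ha) (summable_add_two_mul_rpow_neg hp ha.le).hasSum

lemma tsum_lt_tailBound (hp : 1 < p) (ha : 0 < a) :
    ∑' k : ℕ, (a + 1 + 2 * k) ^ (-p) < tailBound p a := by
  have hmid : ∀ k : ℕ,
      (a + 1 + 2 * k) ^ (-p) < tailBound p (a + 2 * k) - tailBound p (a + 2 * k + 2) := fun k => by
      have := rpow_neg_lt_tailBound_sub_tailBound hp (a := a + 2 * k) (by positivity)
      ring_nf at this ⊢
      exact this
  exact hasSum_lt (fun k => (hmid k).le) (hmid 0)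
    (summable_add_two_mul_rpow_neg hp (by linarith)).hasSum (hasSum_tailBound_sub hp ha)

lemma two_rpow_mul_tailBound (hp : 1 < p) (ha : 0 ≤ a) :
    2 ^ p * tailBound p a = 2 ^ (p - 1) / ((p - 1) * a ^ (p - 1)) := by
  have hp1 : p - 1 ≠ 0 := by linarith
  rw [tailBound, show 1 - p = -(p - 1) by ring, Real.rpow_neg ha,
    show p = p - 1 + 1 by ring, Real.rpow_add_one two_ne_zero]
  field_simp
  ring_nf

end TailBounds

noncomputable def oddTerm (p : ℝ) (k : ℕ) : ℝ := (2 * k + 1) ^ (-p)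

section OddTerm

variable {p : ℝ}

lemma oddTerm_pos (p : ℝ) (k : ℕ) : 0 < oddTerm p k := by
  unfold oddTerm; positivity

@[simp] lemma oddTerm_zero (p : ℝ) : oddTerm p 0 = 1 := by simp [oddTerm]

lemma oddTerm_antitone (hp : 0 ≤ p) : Antitone (oddTerm p) := fun k l hkl => by
  unfold oddTerm
  exact Real.rpow_le_rpow_of_nonpos (by positivity) (by gcongr) (by linarith)

lemma oddTerm_add (p : ℝ) (k n : ℕ) : oddTerm p (k + n) = (2 * n + 1 + 2 * k) ^ (-p) := by
  simp only [oddTerm]; push_cast; ring_nf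

lemma summable_oddTerm (hp : 1 < p) : Summable (oddTerm p) :=
  (summable_add_two_mul_rpow_neg hp zero_le_one).congr fun k => by simp only [oddTerm]; ring_nf

lemma hasSum_zetaR (hp : 1 < p) : HasSum (fun k : ℕ => ((k : ℝ) + 1) ^ (-p)) (zetaR p) := by
  have hs : Summable fun k : ℕ => ((k : ℝ) + 1) ^ (-p) :=
    ((Real.summable_one_div_nat_add_rpow 1 p).mpr hp).congr fun k => by
      rw [abs_of_nonneg (by positivity), one_div, Real.rpow_neg (by positivity)]
  convert hs.hasSum
  have hre : 1 < (p : ℂ).re := by simpa using hp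
  rw [zetaR, zeta_eq_tsum_one_div_nat_add_one_cpow hre, ← Complex.ofReal_re (∑' k : ℕ, _),
    Complex.ofReal_tsum]
  congr 2 with k
  have hk : (0 : ℝ) ≤ k + 1 := by positivity
  rw [Real.rpow_neg hk, Complex.ofReal_inv, Complex.ofReal_cpow hk, one_div]
  norm_cast

lemma two_rpow_mul_tsum_oddTerm (hp : 1 < p) :
    2 ^ p * ∑' k, oddTerm p k = (2 ^ p - 1) * zetaR p := by
  have hζ := hasSum_zetaR hp
  -- the terms of `∑ (k+1)^(-p)` at even indices are `oddTerm p k`, at odd ones `2^(-p) (k+1)^(-p)`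
  have hsplit := HasSum.even_add_odd (f := fun k : ℕ => ((k : ℝ) + 1) ^ (-p))
    (m := ∑' k, oddTerm p k) (m' := 2 ^ (-p) * zetaR p)
    ((summable_oddTerm hp).hasSum.congr_fun fun k => by simp only [oddTerm]; push_cast; ring_nf)
    ((hζ.mul_left _).congr_fun fun k => by
      rw [← Real.mul_rpow zero_le_two (by positivity)]; push_cast; ring_nf)
  have h2 : (2 : ℝ) ^ p * 2 ^ (-p) = 1 := by rw [← Real.rpow_add two_pos]; simp
  linear_combination (2 ^ p) * hsplit.unique hζ - zetaR p * h2

lemma sum_range_oddTerm_le (hp : 1 < p) (n : ℕ) :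
    ∑ k ∈ range n, oddTerm p k ≤ ∑' k, oddTerm p k - tailBound p (2 * n + 1) := by
  have htail := tailBound_le_tsum hp (a := 2 * n + 1) (by positivity)
  simp only [← oddTerm_add] at htail
  rw [← (summable_oddTerm hp).sum_add_tsum_nat_add n]
  linarith

lemma tsum_oddTerm_sub_lt_sum_range (hp : 1 < p) {n : ℕ} (hn : 0 < n) :
    ∑' k, oddTerm p k - tailBound p (2 * n) < ∑ k ∈ range n, oddTerm p k := by
  have htail := tsum_lt_tailBound hp (a := 2 * n) (by positivity)
  simp only [← oddTerm_add] at htail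
  rw [← (summable_oddTerm hp).sum_add_tsum_nat_add n]
  linarith

lemma one_add_oddTerm_le_sum_range {n : ℕ} (hn : 2 ≤ n) :
    1 + oddTerm p (n - 1) ≤ ∑ k ∈ range n, oddTerm p k := by
  obtain ⟨m, rfl⟩ : ∃ m, n = m + 1 := ⟨n - 1, by omega⟩
  rw [sum_range_succ, Nat.add_sub_cancel, ← oddTerm_zero p]
  gcongr
  exact single_le_sum (fun k _ => (oddTerm_pos p k).le) (mem_range.2 (by omega))

end OddTerm

lemma abs_two_div_rpow (p x : ℝ) : |2 / x| ^ p = 2 ^ p * |x| ^ (-p) := by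
  rw [abs_div, abs_two, Real.div_rpow zero_le_two (abs_nonneg x), Real.rpow_neg (abs_nonneg x),
    div_eq_mul_inv]

lemma abs_two_div_rpow_of_le (p : ℝ) {i j : ℕ} (h : j ≤ i) :
    |2 / (1 + 2 * ((i : ℝ) - j))| ^ p = 2 ^ p * oddTerm p (i - j) := by
  rw [abs_two_div_rpow, oddTerm, Nat.cast_sub h,
    abs_of_nonneg (by linarith [(Nat.cast_le (α := ℝ)).2 h])]
  ring_nf

lemma abs_two_div_rpow_of_lt (p : ℝ) {i j : ℕ} (h : i < j) :
    |2 / (1 + 2 * ((i : ℝ) - j))| ^ p = 2 ^ p * oddTerm p (j - i - 1) := by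
  have h' : (i : ℝ) + 1 ≤ j := by exact_mod_cast h
  rw [abs_two_div_rpow, oddTerm, Nat.cast_sub (by omega), Nat.cast_sub h.le,
    abs_of_neg (by linarith)]
  push_cast
  ring_nf

lemma sum_range_sum_range_abs_two_div_rpow (p : ℝ) (n : ℕ) :
    ∑ i ∈ range n, ∑ j ∈ range n, |2 / (1 + 2 * ((i : ℝ) - j))| ^ p =
      2 ^ p * ∑ k ∈ range n, (2 * ((n : ℝ) - k) - 1) * oddTerm p k := by
  induction n with
  | zero => simp
  | succ n ih =>
    have hsplit :
        ∑ i ∈ range (n + 1), ∑ j ∈ range (n + 1), |2 / (1 + 2 * ((i : ℝ) - j))| ^ p =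
        ∑ i ∈ range n, ∑ j ∈ range n, |2 / (1 + 2 * ((i : ℝ) - j))| ^ p +
          ∑ j ∈ range (n + 1), |2 / (1 + 2 * ((n : ℝ) - j))| ^ p +
          ∑ i ∈ range n, |2 / (1 + 2 * ((i : ℝ) - n))| ^ p := by
      simp only [sum_range_succ, sum_add_distrib]; ring
    have hrow : ∑ j ∈ range (n + 1), |2 / (1 + 2 * ((n : ℝ) - j))| ^ p =
        2 ^ p * ∑ k ∈ range (n + 1), oddTerm p k := by
      rw [← sum_range_reflect, mul_sum]
      refine sum_congr rfl fun k hk => ?_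
      simp only [mem_range] at hk
      rw [abs_two_div_rpow_of_le p (by omega)]
      congr 2; omega
    have hcol : ∑ i ∈ range n, |2 / (1 + 2 * ((i : ℝ) - n))| ^ p =
        2 ^ p * ∑ k ∈ range n, oddTerm p k := by
      rw [← sum_range_reflect, mul_sum]
      refine sum_congr rfl fun k hk => ?_
      simp only [mem_range] at hk
      rw [abs_two_div_rpow_of_lt p (by omega)]
      congr 2; omega
    have hweight : ∀ k : ℕ, (2 * (((n + 1 : ℕ) : ℝ) - k) - 1) * oddTerm p k =
        (2 * ((n : ℝ) - k) - 1) * oddTerm p k + oddTerm p k + oddTerm p k := fun k => by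
      push_cast; ring
    rw [hsplit, ih, hrow, hcol]
    simp only [sum_range_succ, hweight, sum_add_distrib]
    ring

lemma sum_abs_cauchyToeplitz_rpow (p : ℝ) (n : ℕ) :
    ∑ i, ∑ j, |cauchyToeplitz n i j| ^ p =
      2 ^ p * ∑ k ∈ range n, (2 * ((n : ℝ) - k) - 1) * oddTerm p k := by
  rw [← sum_range_sum_range_abs_two_div_rpow]
  simp only [cauchyToeplitz, Finset.sum_range]

section WeightedSum

variable {p : ℝ} {n : ℕ}

lemma sum_weight_mul_oddTerm_lt (hn : 2 ≤ n) :
    ∑ k ∈ range n, (2 * ((n : ℝ) - k) - 1) * oddTerm p k <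
      (2 * n - 1) * ∑ k ∈ range n, oddTerm p k := by
  rw [mul_sum]
  refine sum_lt_sum (fun k _ => ?_) ⟨1, mem_range.2 hn, ?_⟩
  · exact mul_le_mul_of_nonneg_right (by linarith [k.cast_nonneg (α := ℝ)]) (oddTerm_pos p k).le
  · exact mul_lt_mul_of_pos_right (by push_cast; linarith) (oddTerm_pos p 1)

lemma le_mul_sum_weight_mul_oddTerm (hp : 0 ≤ p) (hn : 2 ≤ n) :
    ((n : ℝ) ^ 2 + 2) * ∑ k ∈ range n, oddTerm p k - 2 * n * oddTerm p (n - 1) ≤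
      n * ∑ k ∈ range n, (2 * ((n : ℝ) - k) - 1) * oddTerm p k := by
  obtain ⟨m, rfl⟩ : ∃ m, n = m + 1 := ⟨n - 1, by omega⟩
  set N : ℝ := ((m + 1 : ℕ) : ℝ)
  have hN : 2 ≤ N := by simp only [N]; exact_mod_cast hn
  have hpartial : ∀ j : ℕ,
      ∑ k ∈ range j, (N ^ 2 - 2 - N * (2 * k + 1)) = j * (N ^ 2 - 2 - N * j) := by
    intro j
    induction j with
    | zero => simp
    | succ j ih => rw [sum_range_succ, ih]; push_cast; ring
  have habel := mul_sum_range_le_sum_range_mul_of_antitone (oddTerm_antitone hp)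
    (g := fun k : ℕ => N ^ 2 - 2 - N * (2 * k + 1)) (n := m) fun j hj => by
      rw [hpartial]
      have hj : (j : ℝ) + 1 ≤ N := by simp only [N]; exact_mod_cast Nat.succ_le_succ hj
      have : 0 ≤ N ^ 2 - 2 - N * j := by nlinarith
      positivity
  have hsplit : N * ∑ k ∈ range (m + 1), (2 * (N - k) - 1) * oddTerm p k -
      (N ^ 2 + 2) * ∑ k ∈ range (m + 1), oddTerm p k =
        ∑ k ∈ range (m + 1), oddTerm p k * (N ^ 2 - 2 - N * (2 * k + 1)) := by
    rw [mul_sum, mul_sum, ← sum_sub_distrib]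
    exact sum_congr rfl fun k _ => by ring
  rw [hpartial] at habel
  rw [Nat.add_sub_cancel]
  linarith

end WeightedSum

/-- The constant `C′(n,p)` of the lower bound. -/
noncomputable def lowerCorrection (p : ℝ) (n : ℕ) : ℝ :=
  ((n : ℝ) ^ 2 + 2) / ((p - 1) * (n : ℝ) ^ (p + 1)) +
    2 ^ (p + 1) / ((n : ℝ) * (2 * (n : ℝ) - 1) ^ p)

/-- The constant `C″(n,p)` of the upper bound. -/
noncomputable def upperCorrection (p : ℝ) (n : ℕ) : ℝ :=
  2 ^ (p - 1) / ((p - 1) * (2 * (n : ℝ) + 1) ^ (p - 1))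

section MainBounds

variable {p : ℝ} {n : ℕ}

lemma upperCorrection_eq (hp : 1 < p) (n : ℕ) :
    upperCorrection p n = 2 ^ p * tailBound p (2 * n + 1) := by
  rw [two_rpow_mul_tailBound hp (by positivity), upperCorrection]

lemma lowerCorrection_eq (hp : 1 < p) (hn : 0 < n) :
    lowerCorrection p n =
      2 ^ p * ((1 + 2 / (n : ℝ) ^ 2) * tailBound p (2 * n) + 2 / n * oddTerm p (n - 1)) := by
  have hn0 : (0 : ℝ) < n := by exact_mod_cast hn
  have hp1 : p - 1 ≠ 0 := by linarith
  have htail : 2 ^ p * tailBound p (2 * n) = 1 / ((p - 1) * (n : ℝ) ^ (p - 1)) := by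
    rw [two_rpow_mul_tailBound hp (by positivity), Real.mul_rpow zero_le_two hn0.le]
    field_simp
  have hpow : (n : ℝ) ^ (p + 1) = (n : ℝ) ^ (p - 1) * n ^ 2 := by
    rw [← Real.rpow_natCast, ← Real.rpow_add hn0]; congr 1; push_cast; ring
  have hodd : oddTerm p (n - 1) = ((2 * (n : ℝ) - 1) ^ p)⁻¹ := by
    have h1 : (1 : ℝ) ≤ n := by exact_mod_cast hn
    rw [oddTerm, Nat.cast_sub hn, Nat.cast_one, show 2 * ((n : ℝ) - 1) + 1 = 2 * n - 1 by ring,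
      Real.rpow_neg (by linarith)]
  rw [mul_add, ← mul_assoc, mul_comm _ (1 + _), mul_assoc, htail, hodd, lowerCorrection, hpow,
    Real.rpow_add_one two_ne_zero]
  field_simp

lemma sum_abs_cauchyToeplitz_rpow_div_lt (hp : 1 < p) (hn : 2 ≤ n) :
    (∑ i, ∑ j, |cauchyToeplitz n i j| ^ p) / n <
      (2 - 1 / (n : ℝ)) * ((2 ^ p - 1) * zetaR p - upperCorrection p n) := by
  have hn' : (2 : ℝ) ≤ n := by exact_mod_cast hn
  rw [sum_abs_cauchyToeplitz_rpow, ← two_rpow_mul_tsum_oddTerm hp, upperCorrection_eq hp,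
    ← mul_sub]
  calc (2 ^ p * ∑ k ∈ range n, (2 * ((n : ℝ) - k) - 1) * oddTerm p k) / n
      < 2 ^ p * ((2 * n - 1) * ∑ k ∈ range n, oddTerm p k) / n := by
        gcongr; exact sum_weight_mul_oddTerm_lt hn
    _ = (2 - 1 / (n : ℝ)) * (2 ^ p * ∑ k ∈ range n, oddTerm p k) := by
        field_simp
    _ ≤ (2 - 1 / (n : ℝ)) * (2 ^ p * (∑' k, oddTerm p k - tailBound p (2 * n + 1))) := by
        have hfactor : 0 ≤ 2 - 1 / (n : ℝ) := by
          rw [sub_nonneg, div_le_iff₀ (by positivity)]; linarith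
        gcongr
        exact sum_range_oddTerm_le hp n

lemma lowerBound_pos (hp : 1 < p) (hn : 2 ≤ n) :
    0 < (1 + 2 / (n : ℝ) ^ 2) * ((2 ^ p - 1) * zetaR p) - lowerCorrection p n := by
  have hn' : (2 : ℝ) ≤ n := by exact_mod_cast hn
  rw [lowerCorrection_eq hp (by omega), ← two_rpow_mul_tsum_oddTerm hp]
  have hgap := tailBound_sub_tailBound_lt hp (a := 2 * n) (h := 1) (by positivity) one_pos
  have hsmall : (2 * (n : ℝ)) ^ (-p) ≤ 1 :=
    Real.rpow_le_one_of_one_le_of_nonpos (by linarith) (by linarith)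
  have hA := sum_range_oddTerm_le hp n
  have hA' := one_add_oddTerm_le_sum_range (p := p) hn
  have hhead : 1 / 2 + oddTerm p (n - 1) < ∑' k, oddTerm p k - tailBound p (2 * n) := by
    linarith
  have hfactor : ∑' k, oddTerm p k - tailBound p (2 * n) ≤
      (1 + 2 / (n : ℝ) ^ 2) * (∑' k, oddTerm p k - tailBound p (2 * n)) :=
    le_mul_of_one_le_left (by linarith [oddTerm_pos p (n - 1)])
      (le_add_of_nonneg_right (by positivity))
  have hlast : 2 / (n : ℝ) * oddTerm p (n - 1) ≤ oddTerm p (n - 1) :=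
    mul_le_of_le_one_left (oddTerm_pos p (n - 1)).le
      (by rw [div_le_one (by positivity)]; exact hn')
  have hcore : 0 < (1 + 2 / (n : ℝ) ^ 2) * (∑' k, oddTerm p k - tailBound p (2 * n)) -
      2 / n * oddTerm p (n - 1) := by
    linarith
  calc (0 : ℝ) < 2 ^ p * ((1 + 2 / (n : ℝ) ^ 2) * (∑' k, oddTerm p k - tailBound p (2 * n)) -
      2 / n * oddTerm p (n - 1)) := mul_pos (by positivity) hcore
    _ = _ := by ring

lemma lowerBound_lt (hp : 1 < p) (hn : 2 ≤ n) :
    (1 + 2 / (n : ℝ) ^ 2) * ((2 ^ p - 1) * zetaR p) - lowerCorrection p n <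
      (∑ i, ∑ j, |cauchyToeplitz n i j| ^ p) / n := by
  have hn0 : (0 : ℝ) < n := by positivity
  rw [lowerCorrection_eq hp (by omega), ← two_rpow_mul_tsum_oddTerm hp,
    sum_abs_cauchyToeplitz_rpow]
  set W := ∑ k ∈ range n, (2 * ((n : ℝ) - k) - 1) * oddTerm p k
  set Λ := (1 + 2 / (n : ℝ) ^ 2) * (∑' k, oddTerm p k - tailBound p (2 * n)) -
    2 / n * oddTerm p (n - 1)
  have hΛ : Λ < W / n := by
    have hA := tsum_oddTerm_sub_lt_sum_range hp (n := n) (by omega)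
    have hW := le_mul_sum_weight_mul_oddTerm (by linarith : 0 ≤ p) hn
    have hscaled : (n : ℝ) ^ 2 * Λ < (n : ℝ) ^ 2 * (W / n) := by
      have e1 : (n : ℝ) ^ 2 * Λ =
          ((n : ℝ) ^ 2 + 2) * (∑' k, oddTerm p k - tailBound p (2 * n)) -
            2 * n * oddTerm p (n - 1) := by simp only [Λ]; field_simp
      have e2 : (n : ℝ) ^ 2 * (W / n) = n * W := by field_simp
      rw [e1, e2]
      linarith [mul_lt_mul_of_pos_left hA (by positivity : (0 : ℝ) < n ^ 2 + 2)]
    exact lt_of_mul_lt_mul_left hscaled (by positivity)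
  calc (1 + 2 / (n : ℝ) ^ 2) * (2 ^ p * ∑' k, oddTerm p k) -
        2 ^ p * ((1 + 2 / (n : ℝ) ^ 2) * tailBound p (2 * n) + 2 / n * oddTerm p (n - 1))
      = 2 ^ p * Λ := by ring
    _ < 2 ^ p * (W / n) := by gcongr
    _ = 2 ^ p * W / n := by ring

end MainBounds

theorem stmt_4 (p : ℝ) (hp : 1 < p) (n : ℕ) (hn : 2 ≤ n) :
    ((1 + 2 / (n : ℝ) ^ 2) * ((2 ^ p - 1) * zetaR p) -
        (((n : ℝ) ^ 2 + 2) / ((p - 1) * (n : ℝ) ^ (p + 1)) +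
          2 ^ (p + 1) / ((n : ℝ) * (2 * (n : ℝ) - 1) ^ p))) ^ (1 / p) <
      (n : ℝ) ^ (-(1 / p)) * lpNorm n p ∧
    (n : ℝ) ^ (-(1 / p)) * lpNorm n p <
      (2 - 1 / (n : ℝ)) ^ (1 / p) *
        ((2 ^ p - 1) * zetaR p -
          2 ^ (p - 1) / ((p - 1) * (2 * (n : ℝ) + 1) ^ (p - 1))) ^ (1 / p) := by
  have hn0 : (0 : ℝ) < n := by positivity
  have hp0 : 0 < 1 / p := by positivity
  have hnorm : (n : ℝ) ^ (-(1 / p)) * lpNorm n p =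
      ((∑ i, ∑ j, |cauchyToeplitz n i j| ^ p) / n) ^ (1 / p) := by
    rw [lpNorm, Real.div_rpow (by positivity) hn0.le, Real.rpow_neg hn0.le, inv_mul_eq_div]
  have hfactor : 0 < 2 - 1 / (n : ℝ) := by
    have : 1 / (n : ℝ) ≤ 1 := by rw [div_le_one hn0]; exact_mod_cast (by omega : 1 ≤ n)
    linarith
  have hupper := sum_abs_cauchyToeplitz_rpow_div_lt hp hn
  have hupper_pos : 0 < (2 ^ p - 1) * zetaR p - upperCorrection p n :=
    pos_of_mul_pos_right ((div_nonneg (by positivity) hn0.le).trans_lt hupper) hfactor.le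
  rw [hnorm]
  refine ⟨Real.rpow_lt_rpow (lowerBound_pos hp hn).le (lowerBound_lt hp hn) hp0, ?_⟩
  exact (Real.rpow_lt_rpow (by positivity) hupper hp0).trans_eq
    (Real.mul_rpow hfactor.le hupper_pos.le)
end

section
/- Define g(p) = 3 − 2^p + 3^{−p} − (2/3)^p for p ≥ 1. Then g is strictly decreasing on [1, ∞), there is a unique δ ∈ (1, 2) with g(δ) = 0 (equivalently, δ is the unique root of 2^δ + 6^δ = 3^{δ+1} + 1), g(p) > 0 for 1 ≤ p < δ, and g(p) < 0 for p > δ. -/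
open Finset Real Filter

noncomputable def g (p : ℝ) : ℝ := 3 - 2 ^ p + 3 ^ (-p) - (2 / 3) ^ p

/-!
`g` has derivative `-2^p log 2 - 3^(-p) log 3 - (2/3)^p log(2/3)`, which is negative for `p > 0`
because `log 3 < 2 log 2`. Since `g 1 = 2/3 > 0 > -4/3 = g 2`, the intermediate value theorem
gives a root in `(1, 2)`, unique by monotonicity, and multiplying `g δ = 0` by `3^δ` gives
`2^δ + 6^δ = 3^(δ+1) + 1`.
-/

open Set

lemma continuous_g : Continuous g := by unfold g; fun_prop (disch := norm_num)

lemma hasDerivAt_g (p : ℝ) :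
    HasDerivAt g (-(2 ^ p * log 2) - 3 ^ (-p) * log 3 - (2 / 3) ^ p * log (2 / 3)) p := by
  have h3 : HasDerivAt (fun x : ℝ => (3 : ℝ) ^ (-x)) (3 ^ (-p) * log 3 * -1) p :=
    (hasStrictDerivAt_const_rpow (by norm_num) (-p)).hasDerivAt.comp p (hasDerivAt_neg p)
  exact ((((hasDerivAt_const p (3 : ℝ)).sub
    (hasStrictDerivAt_const_rpow (by norm_num : (0 : ℝ) < 2) p).hasDerivAt).add h3).sub
    (hasStrictDerivAt_const_rpow (by norm_num : (0 : ℝ) < 2 / 3) p).hasDerivAt).congr_deriv (by ring)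

lemma deriv_g_neg {p : ℝ} (hp : 0 < p) : deriv g p < 0 := by
  have hlog : log (2 / 3) = log 2 - log 3 := log_div (by norm_num) (by norm_num)
  -- `log 3 < 2 log 2` bounds `-(2/3)^p log(2/3)` by `(2/3)^p log 2 < 2^p log 2`
  have h34 : log 3 < 2 * log 2 := by
    rw [← log_rpow two_pos]; exact log_lt_log (by norm_num) (by norm_num)
  have hlt : ((2 : ℝ) / 3) ^ p < 2 ^ p := rpow_lt_rpow (by norm_num) (by norm_num) hp
  have h3 : 0 < (3 : ℝ) ^ (-p) * log 3 := by positivity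
  rw [(hasDerivAt_g p).deriv, hlog]
  nlinarith [mul_lt_mul_of_pos_right hlt (log_pos one_lt_two),
    mul_lt_mul_of_pos_left h34 (by positivity : (0 : ℝ) < (2 / 3) ^ p)]

lemma g_strictAntiOn : StrictAntiOn g (Ici 0) :=
  strictAntiOn_of_deriv_neg (convex_Ici 0) continuous_g.continuousOn
    (fun _ hp => deriv_g_neg (by simpa using hp))

lemma g_one : g 1 = 2 / 3 := by norm_num [g]

lemma g_two : g 2 = -(4 / 3) := by norm_num [g, rpow_neg, rpow_two]

lemma three_rpow_mul_g (p : ℝ) : 3 ^ p * g p = 3 ^ (p + 1) + 1 - 2 ^ p - 6 ^ p := by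
  have h6 : (3 : ℝ) ^ p * 2 ^ p = 6 ^ p := by rw [← mul_rpow] <;> norm_num
  have h2 : (3 : ℝ) ^ p * (2 / 3) ^ p = 2 ^ p := by rw [← mul_rpow] <;> norm_num
  have h1 : (3 : ℝ) ^ p * 3 ^ (-p) = 1 := by rw [← rpow_add] <;> norm_num
  rw [rpow_add_one (by norm_num), g]
  linear_combination -h6 + h1 - h2

lemma g_eq_zero_iff (p : ℝ) : g p = 0 ↔ (2 : ℝ) ^ p + 6 ^ p = 3 ^ (p + 1) + 1 := by
  rw [← mul_eq_zero_iff_left (rpow_pos_of_pos three_pos p).ne', three_rpow_mul_g]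
  constructor <;> intro h <;> linarith

lemma exists_mem_Ioo_g_eq_zero : ∃ δ ∈ Ioo (1 : ℝ) 2, g δ = 0 :=
  intermediate_value_Ioo' one_le_two continuous_g.continuousOn
    (by rw [g_one, g_two]; constructor <;> norm_num)

theorem stmt_5 :
    StrictAntiOn g (Set.Ici 1) ∧
    (∃! δ : ℝ, δ ∈ Set.Ioo (1 : ℝ) 2 ∧ g δ = 0) ∧
    ∀ δ : ℝ, δ ∈ Set.Ioo (1 : ℝ) 2 → g δ = 0 →
      ((2 : ℝ) ^ δ + 6 ^ δ = 3 ^ (δ + 1) + 1) ∧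
      (∀ p : ℝ, 1 ≤ p → p < δ → 0 < g p) ∧
      (∀ p : ℝ, δ < p → g p < 0) := by
  have hanti : StrictAntiOn g (Ici 1) := g_strictAntiOn.mono (Ici_subset_Ici.2 zero_le_one)
  refine ⟨hanti, ?_, fun δ hδ hgδ => ⟨(g_eq_zero_iff δ).1 hgδ, ?_, ?_⟩⟩
  · obtain ⟨δ, hδ, hgδ⟩ := exists_mem_Ioo_g_eq_zero
    exact ⟨δ, ⟨hδ, hgδ⟩, fun y ⟨hy, hgy⟩ =>
      hanti.injOn (mem_Ici.2 hy.1.le) (mem_Ici.2 hδ.1.le) (hgy.trans hgδ.symm)⟩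
  · intro p hp hpδ
    simpa [hgδ] using hanti (mem_Ici.2 hp) (mem_Ici.2 hδ.1.le) hpδ
  · intro p hδp
    simpa [hgδ] using hanti (mem_Ici.2 hδ.1.le) (mem_Ici.2 (hδ.1.le.trans hδp.le)) hδp
end

section
/- Let p ≥ 1 and n ≥ 1. Then n^{−1} ‖T_n‖_{p,1} ≤ (n+1)^{−1} ‖T_{n+1}‖_{p,1}; that is, the sequence n ↦ n^{−1} ‖T_n‖_{p,1} is nondecreasing. -/
open Finset Real Filter

/-! The `ℓ_p` column norms of `T_{n+1}` dominate those of `T_n` twice over: column `j` of `T_{n+1}`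
extends column `j` of `T_n` by one entry, and, `T` being Toeplitz, column `j + 1` of `T_{n+1}`
contains column `j` of `T_n` shifted down by one. Splitting the columns of `T_{n+1}` at any
`m < n` therefore gives `‖T_{n+1}‖_{p,1} ≥ ‖T_n‖_{p,1} + c_m`, where `c_m` is the norm of
column `m` of `T_n`; averaging over `m` yields `n ‖T_{n+1}‖_{p,1} ≥ (n + 1) ‖T_n‖_{p,1}`. -/

section SumShift

variable {α : Type*} [AddCommMonoid α] [PartialOrder α] [IsOrderedAddMonoid α]

theorem sum_range_add_le_sum_range_succ {a b : ℕ → α} (h : ∀ j, a j ≤ b j)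
    (h_shift : ∀ j, a j ≤ b (j + 1)) {m n : ℕ} (hmn : m < n) :
    ∑ j ∈ range n, a j + a m ≤ ∑ j ∈ range (n + 1), b j := by
  induction n, hmn using Nat.le_induction with
  | base =>
    rw [sum_range_succ _ (m + 1)]
    exact add_le_add (sum_le_sum fun j _ => h j) (h_shift m)
  | succ n _ ih =>
    rw [sum_range_succ, add_right_comm, sum_range_succ _ (n + 1)]
    exact add_le_add ih (h_shift n)

theorem succ_nsmul_sum_range_le_nsmul_sum_range_succ {a b : ℕ → α} (h : ∀ j, a j ≤ b j)
    (h_shift : ∀ j, a j ≤ b (j + 1)) (n : ℕ) :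
    (n + 1) • ∑ j ∈ range n, a j ≤ n • ∑ j ∈ range (n + 1), b j := by
  calc (n + 1) • ∑ j ∈ range n, a j = ∑ m ∈ range n, (∑ j ∈ range n, a j + a m) := by
        rw [sum_add_distrib, sum_const, card_range, succ_nsmul]
    _ ≤ ∑ _m ∈ range n, ∑ j ∈ range (n + 1), b j :=
        sum_le_sum fun m hm => sum_range_add_le_sum_range_succ h h_shift (mem_range.mp hm)
    _ = n • ∑ j ∈ range (n + 1), b j := by rw [sum_const, card_range]

end SumShift

noncomputable def cauchyToeplitzEntry (i j : ℕ) : ℝ := 2 / (1 + 2 * ((i : ℝ) - j))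

theorem cauchyToeplitzEntry_succ_succ (i j : ℕ) :
    cauchyToeplitzEntry (i + 1) (j + 1) = cauchyToeplitzEntry i j := by
  simp only [cauchyToeplitzEntry]
  push_cast
  ring_nf

noncomputable def cauchyToeplitzColNorm (p : ℝ) (n j : ℕ) : ℝ :=
  (∑ i ∈ range n, |cauchyToeplitzEntry i j| ^ p) ^ (1 / p)

theorem lpqNorm_one_eq_sum_colNorm (p : ℝ) (n : ℕ) :
    lpqNorm n p 1 = ∑ j ∈ range n, cauchyToeplitzColNorm p n j := by
  simp only [lpqNorm, cauchyToeplitzColNorm, one_div_one, rpow_one]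
  rw [← Fin.sum_univ_eq_sum_range]
  refine sum_congr rfl fun j _ => ?_
  rw [← Fin.sum_univ_eq_sum_range (fun i => |cauchyToeplitzEntry i j| ^ p)]
  rfl

section ColNorm

variable {p : ℝ} (hp : 0 ≤ p)
include hp

theorem cauchyToeplitzColNorm_le_succ (n j : ℕ) :
    cauchyToeplitzColNorm p n j ≤ cauchyToeplitzColNorm p (n + 1) j := by
  refine rpow_le_rpow (by positivity) ?_ (by positivity)
  rw [sum_range_succ]
  exact le_add_of_nonneg_right (by positivity)

theorem cauchyToeplitzColNorm_le_succ_succ (n j : ℕ) :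
    cauchyToeplitzColNorm p n j ≤ cauchyToeplitzColNorm p (n + 1) (j + 1) := by
  refine rpow_le_rpow (by positivity) ?_ (by positivity)
  simp only [sum_range_succ', cauchyToeplitzEntry_succ_succ]
  exact le_add_of_nonneg_right (by positivity)

theorem succ_mul_lpqNorm_one_le (n : ℕ) :
    ((n : ℝ) + 1) * lpqNorm n p 1 ≤ n * lpqNorm (n + 1) p 1 := by
  simpa only [lpqNorm_one_eq_sum_colNorm, nsmul_eq_mul, Nat.cast_succ] using
    succ_nsmul_sum_range_le_nsmul_sum_range_succ (cauchyToeplitzColNorm_le_succ hp n)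
      (cauchyToeplitzColNorm_le_succ_succ hp n) n

end ColNorm

theorem stmt_7 (p : ℝ) (hp : 1 ≤ p) (n : ℕ) (hn : 1 ≤ n) :
    (n : ℝ)⁻¹ * lpqNorm n p 1 ≤ ((n : ℝ) + 1)⁻¹ * lpqNorm (n + 1) p 1 := by
  have hn_pos : (0 : ℝ) < n := by exact_mod_cast hn
  rw [inv_mul_eq_div, inv_mul_eq_div, div_le_div_iff₀ hn_pos (by positivity)]
  linarith [succ_mul_lpqNorm_one_le (by linarith : (0 : ℝ) ≤ p) n]
end

section
/- Let 1 ≤ p < q < ∞ and let n ≥ 3. Then n^{−1/q} ‖T_n‖_{p,q} ≥ 4 (1/(2^p − 1))^{1/p}. -/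
open Finset Real Filter

/-!
Write `S j = ∑ i, |T i j| ^ p`. Since `x ↦ x ^ (q / p)` is convex, the power-mean inequality gives
`∑ j, S j ^ (q / p) ≥ n (∑ j, S j / n) ^ (q / p)`, so it suffices that the total `∑ j, S j` be at
least `n · 4 ^ p / (2 ^ p - 1)`. The four central diagonals `i - j ∈ {0, -1}` (entries `±2`) and
`i - j ∈ {1, -2}` (entries `±2/3`) already contribute `(2n - 1) 2 ^ p + (2n - 3) (2/3) ^ p`, which
is large enough for `n ≥ 3` because `2 ^ p ≥ 2` and `(4/3) ^ p ≥ 4/3`.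
-/

lemma sum_range_succ_sum_range_succ {M : Type*} [AddCommMonoid M] (h : ℕ → ℕ → M) (n : ℕ) :
    ∑ j ∈ range (n + 1), ∑ i ∈ range (n + 1), h i j =
      ∑ j ∈ range n, ∑ i ∈ range n, h i j + ∑ j ∈ range n, h n j +
        ∑ i ∈ range (n + 1), h i n := by
  simp only [sum_range_succ _ n, sum_add_distrib]

lemma central_diagonals_le_sum_sum_sub (g : ℤ → ℝ) (hg : ∀ d, 0 ≤ g d) (m : ℕ) :
    (m + 2) * g 0 + (m + 1) * (g (-1) + g 1) + m * g (-2) ≤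
      ∑ j ∈ range (m + 2), ∑ i ∈ range (m + 2), g ((i : ℤ) - j) := by
  induction m with
  | zero => simp [sum_range_succ]; linarith
  | succ m ih =>
    rw [sum_range_succ_sum_range_succ (fun i j => g ((i : ℤ) - j)) (m + 2)]
    have hrow : g 1 ≤ ∑ j ∈ range (m + 2), g (((m + 2 : ℕ) : ℤ) - j) :=
      calc g 1 = g (((m + 2 : ℕ) : ℤ) - (m + 1 : ℕ)) := by push_cast; ring_nf
        _ ≤ _ := single_le_sum (f := fun j : ℕ => g (((m + 2 : ℕ) : ℤ) - j)) (fun j _ => hg _)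
            (mem_range.2 (Nat.lt_succ_self (m + 1)))
    have hcol : g (-2) + g (-1) + g 0 ≤ ∑ i ∈ range (m + 2 + 1), g ((i : ℤ) - (m + 2 : ℕ)) := by
      have hsub : ({m, m + 1, m + 2} : Finset ℕ) ⊆ range (m + 2 + 1) := by
        intro i hi; simp only [mem_insert, mem_singleton] at hi; simp only [mem_range]; omega
      refine le_trans (le_of_eq ?_) (sum_le_sum_of_subset_of_nonneg hsub fun i _ _ => hg _)
      rw [sum_insert (by simp), sum_pair (by omega)]
      push_cast; ring_nf
    push_cast at ih hrow hcol ⊢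
    linarith

lemma mul_four_rpow_div_le {p : ℝ} (hp : 1 ≤ p) {n : ℝ} (hn : 3 ≤ n) :
    n * (4 ^ p / (2 ^ p - 1)) ≤ (2 * n - 1) * 2 ^ p + (2 * n - 3) * (2 / 3) ^ p := by
  have ht : (2 : ℝ) ≤ 2 ^ p := by
    simpa using rpow_le_rpow_of_exponent_le (by norm_num : (1 : ℝ) ≤ 2) hp
  have htσ : (4 / 3 : ℝ) ≤ 2 ^ p * (2 / 3) ^ p := by
    rw [← mul_rpow (by norm_num) (by norm_num), show (4 / 3 : ℝ) = 2 * (2 / 3) by norm_num]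
    simpa using rpow_le_rpow_of_exponent_le (by norm_num : (1 : ℝ) ≤ 2 * (2 / 3)) hp
  have h4 : (4 : ℝ) ^ p = 2 ^ p * 2 ^ p := by
    rw [← mul_rpow (by norm_num) (by norm_num)]; norm_num
  have hσ : (0 : ℝ) ≤ (2 / 3) ^ p := by positivity
  set t : ℝ := 2 ^ p
  set σ : ℝ := (2 / 3) ^ p
  have hσt : 2 / 3 ≤ σ * (t - 1) := by nlinarith
  have hgrowth : 0 ≤ t * (t - 2) + 2 * σ * (t - 1) := by nlinarith
  rw [h4, mul_div_assoc', div_le_iff₀ (by linarith)]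
  -- `(t - 1)((2n - 1)t + (2n - 3)σ) - n t²`
  --   `= (n - 3)(t(t - 2) + 2σ(t - 1)) + (2t - 1)(t - 2) + 3(σ(t - 1) - 2/3)`
  nlinarith [mul_nonneg (sub_nonneg.2 hn) hgrowth,
    mul_nonneg (by linarith : 0 ≤ 2 * t - 1) (sub_nonneg.2 ht)]

lemma card_mul_rpow_le_sum_rpow {ι : Type*} (s : Finset ι) (z : ι → ℝ) (hz : ∀ i ∈ s, 0 ≤ z i)
    {r : ℝ} (hr : 1 ≤ r) {M : ℝ} (hM : 0 ≤ M) (h : #s * M ≤ ∑ i ∈ s, z i) :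
    #s * M ^ r ≤ ∑ i ∈ s, z i ^ r := by
  rcases s.eq_empty_or_nonempty with rfl | hs
  · simp
  have hc : (0 : ℝ) < #s := by exact_mod_cast hs.card_pos
  have hw : ∑ _i ∈ s, (#s : ℝ)⁻¹ = 1 := by simp [hc.ne']
  have hmean : M ≤ ∑ i ∈ s, (#s : ℝ)⁻¹ * z i := by
    rw [← mul_sum, inv_mul_eq_div, le_div_iff₀ hc, mul_comm]; exact h
  have jensen := rpow_arith_mean_le_arith_mean_rpow s _ z (fun _ _ => by positivity) hw hz hr
  calc #s * M ^ r ≤ #s * (∑ i ∈ s, (#s : ℝ)⁻¹ * z i) ^ r := by gcongr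
    _ ≤ #s * ∑ i ∈ s, (#s : ℝ)⁻¹ * z i ^ r := by gcongr
    _ = ∑ i ∈ s, z i ^ r := by rw [← mul_sum, mul_inv_cancel_left₀ hc.ne']

lemma le_sum_abs_cauchyToeplitz_rpow (p : ℝ) (n : ℕ) (hn : 2 ≤ n) :
    (2 * n - 1) * 2 ^ p + (2 * n - 3) * (2 / 3) ^ p ≤
      ∑ j : Fin n, ∑ i : Fin n, |cauchyToeplitz n i j| ^ p := by
  obtain ⟨m, rfl⟩ : ∃ m, n = m + 2 := ⟨n - 2, by omega⟩
  have hsum := central_diagonals_le_sum_sum_sub (fun d : ℤ => |2 / (1 + 2 * (d : ℝ))| ^ p)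
    (fun _ => by positivity) m
  norm_num [abs_div, sum_range] at hsum
  norm_num [cauchyToeplitz, abs_div]
  linarith

theorem stmt_9 (p q : ℝ) (hp : 1 ≤ p) (hpq : p < q) (n : ℕ) (hn : 3 ≤ n) :
    4 * (1 / (2 ^ p - 1)) ^ (1 / p) ≤ (n : ℝ) ^ (-(1 / q)) * lpqNorm n p q := by
  have hp0 : 0 < p := by linarith
  have hq0 : 0 < q := by linarith
  have hn0 : (0 : ℝ) < n := Nat.cast_pos.2 (by omega)
  have ht : (1 : ℝ) ≤ 2 ^ p := one_le_rpow (by norm_num) hp0.le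
  set M : ℝ := 4 ^ p / (2 ^ p - 1)
  have hM : 0 ≤ M := div_nonneg (by positivity) (by linarith)
  have hsum : #(univ : Finset (Fin n)) * M ≤
      ∑ j : Fin n, ∑ i : Fin n, |cauchyToeplitz n i j| ^ p := by
    simpa using (mul_four_rpow_div_le hp (by exact_mod_cast hn)).trans
      (le_sum_abs_cauchyToeplitz_rpow p n (by omega))
  have hpow := card_mul_rpow_le_sum_rpow univ _ (fun _ _ => by positivity)
    ((one_le_div hp0).2 hpq.le) hM hsum
  rw [card_univ, Fintype.card_fin] at hpow
  have hnorm : (n : ℝ) ^ (1 / q) * M ^ (1 / p) ≤ lpqNorm n p q := by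
    calc (n : ℝ) ^ (1 / q) * M ^ (1 / p) = (n * M ^ (q / p)) ^ (1 / q) := by
          rw [mul_rpow hn0.le (by positivity), ← rpow_mul hM]
          congr 2
          field_simp
      _ ≤ lpqNorm n p q :=
          rpow_le_rpow (mul_nonneg hn0.le (rpow_nonneg hM _)) hpow (by positivity)
  have hM' : M ^ (1 / p) = 4 * (1 / (2 ^ p - 1)) ^ (1 / p) := by
    rw [show M = 4 ^ p * (1 / (2 ^ p - 1)) from div_eq_mul_one_div _ _,
      mul_rpow (by positivity) (by positivity), ← rpow_mul (by norm_num),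
      mul_one_div_cancel hp0.ne', rpow_one]
  calc 4 * (1 / (2 ^ p - 1)) ^ (1 / p)
        = (n : ℝ) ^ (-(1 / q)) * (n ^ (1 / q) * M ^ (1 / p)) := by
        rw [hM', ← mul_assoc, ← rpow_add hn0, neg_add_cancel, rpow_zero, one_mul]
    _ ≤ (n : ℝ) ^ (-(1 / q)) * lpqNorm n p q := by gcongr
end

section
/- For all p ≥ 1, the inequality 2^{p+1} − 5 + 3·(2/3)^p + (2/5)^p − 3·3^{−p} − 5^{−p} > 0 holds; equivalently, 3^{−1/p} ‖T_3‖_p > 4 (1/(2^p − 1))^{1/p} for all p ≥ 1. -/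
open Finset Real Filter

/-!
Write `x = 2 ^ p`, `a = 3 ^ (-p)`, `b = 5 ^ (-p)`. The first quantity is `2x - 5 + (x - 1)(3a + b)`,
and `x` times it is `(x - 1) ‖T₃‖_p^p - 3 · 4 ^ p`, so the norm inequality follows from it after
taking `p`-th roots. For `p ≥ 1` we have `(4/3) ^ p ≥ 4/3` and `(8/5) ^ p ≥ 8/5`, i.e. `3x²a ≥ 4` and
`5x³b ≥ 8`, with equality at `p = 1`. This reduces the claim to the positivity of
`10x⁴ - 25x³ + 20x² - 12x - 8` for `x ≥ 2`, whose Taylor coefficients at `x = 2` are all positive.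
-/

theorem Real.div_rpow_eq_mul_rpow_neg {a b : ℝ} (ha : 0 ≤ a) (hb : 0 ≤ b) (p : ℝ) :
    (a / b) ^ p = a ^ p * b ^ (-p) := by
  rw [div_rpow ha hb, rpow_neg hb, div_eq_mul_inv]

theorem sum_abs_cauchyToeplitz_three_rpow (p : ℝ) :
    ∑ i : Fin 3, ∑ j : Fin 3, |cauchyToeplitz 3 i j| ^ p
      = 2 ^ p * (5 + 3 * 3 ^ (-p) + 5 ^ (-p)) := by
  simp only [cauchyToeplitz, Fin.sum_univ_three, Fin.val_zero, Fin.val_one, Fin.val_two]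
  norm_num
  rw [div_rpow_eq_mul_rpow_neg, div_rpow_eq_mul_rpow_neg] <;> norm_num
  ring

theorem two_mul_sub_five_add_pos {x a b : ℝ} (hx : 2 ≤ x) (ha : 4 ≤ 3 * x ^ 2 * a)
    (hb : 8 ≤ 5 * x ^ 3 * b) : 0 < 2 * x - 5 + (x - 1) * (3 * a + b) := by
  obtain ⟨t, ht, rfl⟩ : ∃ t, 0 ≤ t ∧ x = 2 + t := ⟨x - 2, by linarith, by ring⟩
  have ha' := mul_le_mul_of_nonneg_left ha (by positivity : 0 ≤ 15 * (1 + t) * (2 + t))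
  have hb' := mul_le_mul_of_nonneg_left hb (by positivity : 0 ≤ 3 * (1 + t))
  have hscaled : 0 < 15 * (2 + t) ^ 3 * (2 * (2 + t) - 5 + (2 + t - 1) * (3 * a + b)) := by
    nlinarith [pow_nonneg ht 2, pow_nonneg ht 3, pow_nonneg ht 4]
  exact pos_of_mul_pos_right hscaled (by positivity)

theorem cauchyToeplitz_three_gap_pos {p : ℝ} (hp : 1 ≤ p) :
    0 < 2 * 2 ^ p - 5 + (2 ^ p - 1) * (3 * (3 : ℝ) ^ (-p) + (5 : ℝ) ^ (-p)) := by
  have hpow (n : ℕ) : ((2 : ℝ) ^ p) ^ n = ((2 ^ n : ℕ) : ℝ) ^ p := by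
    rw [← rpow_natCast, ← rpow_mul (by norm_num), mul_comm, rpow_mul (by norm_num)]
    norm_num
  apply two_mul_sub_five_add_pos
  · simpa using rpow_le_rpow_of_exponent_le (by norm_num : (1 : ℝ) ≤ 2) hp
  · rw [hpow, mul_assoc, ← div_rpow_eq_mul_rpow_neg (by norm_num) (by norm_num)]
    have := self_le_rpow_of_one_le (by norm_num : (1 : ℝ) ≤ 4 / 3) hp
    norm_num at this ⊢
    linarith
  · rw [hpow, mul_assoc, ← div_rpow_eq_mul_rpow_neg (by norm_num) (by norm_num)]
    have := self_le_rpow_of_one_le (by norm_num : (1 : ℝ) ≤ 8 / 5) hp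
    norm_num at this ⊢
    linarith

theorem stmt_10 (p : ℝ) (hp : 1 ≤ p) :
    0 < 2 ^ (p + 1) - 5 + 3 * (2 / 3) ^ p + (2 / 5) ^ p
        - 3 * (3 : ℝ) ^ (-p) - (5 : ℝ) ^ (-p) ∧
    4 * (1 / (2 ^ p - 1)) ^ (1 / p) < (3 : ℝ) ^ (-(1 / p)) * lpNorm 3 p := by
  have hgap := cauchyToeplitz_three_gap_pos hp
  have hp0 : 0 < p := by linarith
  have hden : (0 : ℝ) < 2 ^ p - 1 := by
    linarith [one_lt_rpow (by norm_num : (1 : ℝ) < 2) hp0]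
  have h4 : (4 : ℝ) ^ p = 2 ^ p * 2 ^ p := by rw [← mul_rpow] <;> norm_num
  refine ⟨?_, ?_⟩
  · rw [rpow_add_one (by norm_num), div_rpow_eq_mul_rpow_neg (by norm_num) (by norm_num),
      div_rpow_eq_mul_rpow_neg (by norm_num) (by norm_num)]
    linear_combination hgap
  set S := 2 ^ p * (5 + 3 * (3 : ℝ) ^ (-p) + 5 ^ (-p))
  have hcompare : 4 ^ p * (1 / (2 ^ p - 1)) < 3⁻¹ * S := by
    rw [h4, ← div_eq_mul_one_div, div_lt_iff₀ hden]
    linear_combination mul_pos (by positivity : (0 : ℝ) < 2 ^ p) hgap / 3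
  have hlhs : 4 * (1 / (2 ^ p - 1)) ^ (1 / p) = ((4 : ℝ) ^ p * (1 / (2 ^ p - 1))) ^ (1 / p) := by
    rw [mul_rpow (by positivity) (one_div_pos.2 hden).le, one_div p, rpow_rpow_inv (by norm_num) hp0.ne']
  have hrhs : (3 : ℝ) ^ (-(1 / p)) * lpNorm 3 p = (3⁻¹ * S) ^ (1 / p) := by
    rw [lpNorm, sum_abs_cauchyToeplitz_three_rpow, rpow_neg (by norm_num), ← inv_rpow (by norm_num),
      ← mul_rpow (by norm_num) (by positivity)]
  rw [hlhs, hrhs]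
  exact rpow_lt_rpow (mul_pos (by positivity) (one_div_pos.2 hden)).le hcompare (by positivity)
end

section
/- Let p ≥ 1 satisfy 2^p + 6^p ≥ 3^{p+1} + 1, and let q > p be finite. Then 2^{−1/q} ‖T_2‖_{p,q} > 4 (1/(2^p − 1))^{1/p}. -/
open Finset Real Filter

/-!
`T_2 = [[2, -2], [2/3, 2]]`, so its columns have `p`-th power sums `s = 2^p + (2/3)^p` and
`t = 2^p + 2^p`, and `2^{-1/q} ‖T_2‖_{p,q}` is the power mean `M_r(s, t)^{1/q}` with `r = q/p > 1`.
Since `s ≠ t`, strict convexity of `u ↦ u^r` gives `M_r(s, t) > ((s + t)/2)^r`, while the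
hypothesis on `p` is exactly what makes `(s + t)/2 ≥ 4^p/(2^p - 1)`, the `p`-th power of the
left-hand side.
-/

theorem lpqNorm_two (p q : ℝ) :
    lpqNorm 2 p q = ((2 ^ p + (2 / 3) ^ p) ^ (q / p) + (2 ^ p + 2 ^ p) ^ (q / p)) ^ (1 / q) := by
  simp only [lpqNorm, cauchyToeplitz, Fin.sum_univ_two]
  norm_num

theorem rpow_lt_add_rpow_div_two_of_two_mul_le_add {a s t r : ℝ} (ha : 0 ≤ a) (hs : 0 ≤ s)
    (ht : 0 ≤ t) (hst : s ≠ t) (hr : 1 < r) (h : 2 * a ≤ s + t) :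
    a ^ r < (s ^ r + t ^ r) / 2 := by
  have hmid : (1 / 2 * s + 1 / 2 * t) ^ r < 1 / 2 * s ^ r + 1 / 2 * t ^ r :=
    (strictConvexOn_rpow hr).2 (Set.mem_Ici.2 hs) (Set.mem_Ici.2 ht) hst
      (by norm_num) (by norm_num) (by norm_num)
  calc a ^ r ≤ (1 / 2 * s + 1 / 2 * t) ^ r := rpow_le_rpow ha (by linarith) (by linarith)
    _ < (s ^ r + t ^ r) / 2 := by linarith

/-- For `x = 2^p`, `y = 3^p` the hypothesis reads `3^{p+1} + 1 ≤ 2^p + 6^p`. -/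
theorem two_mul_sq_div_sub_one_le {x y : ℝ} (hx : 1 < x) (hy : 0 < y)
    (h : 3 * y + 1 ≤ x + x * y) :
    2 * (x * x / (x - 1)) ≤ x + x / y + (x + x) := by
  have hx1 : 0 < x - 1 := by linarith
  rw [mul_div_assoc', div_le_iff₀ hx1]
  field_simp
  nlinarith

theorem stmt_12 (p q : ℝ) (hp : 1 ≤ p) (h : (3 : ℝ) ^ (p + 1) + 1 ≤ 2 ^ p + 6 ^ p)
    (hq : p < q) :
    4 * (1 / (2 ^ p - 1)) ^ (1 / p) < (2 : ℝ) ^ (-(1 / q)) * lpqNorm 2 p q := by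
  have hp0 : 0 < p := by linarith
  have hq0 : 0 < q := by linarith
  have hx : 1 < (2 : ℝ) ^ p := one_lt_rpow (by norm_num) hp0
  have hkey : 2 * ((4 : ℝ) ^ p / (2 ^ p - 1)) ≤ 2 ^ p + (2 / 3) ^ p + (2 ^ p + 2 ^ p) := by
    rw [show (4 : ℝ) = 2 * 2 by norm_num, div_rpow (by norm_num) (by norm_num),
      mul_rpow (by norm_num) (by norm_num)]
    rw [rpow_add_one (by norm_num), show (6 : ℝ) = 2 * 3 by norm_num,
      mul_rpow (by norm_num) (by norm_num), mul_comm _ (3 : ℝ)] at h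
    exact two_mul_sq_div_sub_one_le hx (by positivity) h
  have hcols : (2 : ℝ) ^ p + (2 / 3) ^ p ≠ 2 ^ p + 2 ^ p := by
    have : (2 / 3 : ℝ) ^ p < 2 ^ p := rpow_lt_rpow (by norm_num) (by norm_num) hp0
    linarith
  have hmean := rpow_lt_add_rpow_div_two_of_two_mul_le_add (by positivity) (by positivity)
    (by positivity) hcols ((one_lt_div hp0).2 hq) hkey
  calc 4 * (1 / (2 ^ p - 1)) ^ (1 / p) = (((4 : ℝ) ^ p / (2 ^ p - 1)) ^ (q / p)) ^ (1 / q) := by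
        rw [← rpow_mul (by positivity), show q / p * (1 / q) = 1 / p by field_simp,
          div_eq_mul_one_div (4 ^ p : ℝ),
          mul_rpow (by positivity) (by positivity), ← rpow_mul (by norm_num),
          mul_one_div_cancel hp0.ne', rpow_one]
    _ < (((2 ^ p + (2 / 3) ^ p) ^ (q / p) + (2 ^ p + 2 ^ p) ^ (q / p)) / 2) ^ (1 / q) :=
        rpow_lt_rpow (by positivity) hmean (by positivity)
    _ = (2 : ℝ) ^ (-(1 / q)) * lpqNorm 2 p q := by
        rw [lpqNorm_two, div_rpow (by positivity) (by norm_num), rpow_neg (by norm_num),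
          div_eq_inv_mul]
end

section
/- Let p > 1 satisfy 2^p + 6^p < 3^{p+1} + 1. Then there exists a unique δ_p ∈ (p, ∞) such that 2^{−1/δ_p} ‖T_2‖_{p,δ_p} = 4 (1/(2^p − 1))^{1/p}, i.e. 2^{−p} ((1 + 3^{−p})^{δ_p/p} + 2^{δ_p/p})^p = 2^{p δ_p} (1/(2^p − 1))^{δ_p}; moreover 2^{−1/q} ‖T_2‖_{p,q} < 4 (1/(2^p − 1))^{1/p} for p < q < δ_p and 2^{−1/q} ‖T_2‖_{p,q} ≥ 4 (1/(2^p − 1))^{1/p} for q ≥ δ_p. -/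
open Finset Real Filter

/-!
The columns of `T₂` have `ℓ_p` norms `a = (2^p + (2/3)^p)^(1/p)` and `b = (2 · 2^p)^(1/p)`, so
`2^(-1/q) ‖T₂‖_{p,q} = ((a^q + b^q)/2)^(1/q)` is the power mean of `a` and `b`. As `a < b`, this
mean is continuous and strictly increasing in `q` (strict convexity of `x ↦ x^(t/s)` for `s < t`)
and tends to `b` as `q → ∞`. The threshold `4 (2^p - 1)^(-1/p)` lies below `b` when `p > 1`, and
above the mean at `q = p` precisely under the hypothesis on `p`. The intermediate value theorem
produces `δ_p`; strict monotonicity gives the inequalities and uniqueness.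
-/

noncomputable def powerMean (a b q : ℝ) : ℝ := ((a ^ q + b ^ q) / 2) ^ (1 / q)

section PowerMean

variable {a b : ℝ}

lemma powerMean_nonneg (ha : 0 ≤ a) (hb : 0 ≤ b) (q : ℝ) : 0 ≤ powerMean a b q :=
  rpow_nonneg (by positivity) _

lemma powerMean_rpow_self (ha : 0 ≤ a) (hb : 0 ≤ b) {q : ℝ} (hq : q ≠ 0) :
    powerMean a b q ^ q = (a ^ q + b ^ q) / 2 := by
  rw [powerMean, ← rpow_mul (by positivity), one_div_mul_cancel hq, rpow_one]

lemma powerMean_strictMonoOn (ha : 0 ≤ a) (hb : 0 ≤ b) (hab : a ≠ b) :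
    StrictMonoOn (powerMean a b) (Set.Ioi 0) := by
  intro s (hs : 0 < s) t (ht : 0 < t) hst
  have hne : a ^ s ≠ b ^ s := fun h => hab (rpow_left_injOn hs.ne' ha hb h)
  have hjensen := (strictConvexOn_rpow ((one_lt_div hs).2 hst)).2
    (Set.mem_Ici.2 (rpow_nonneg ha s)) (Set.mem_Ici.2 (rpow_nonneg hb s)) hne
    (by norm_num : (0 : ℝ) < 1 / 2) (by norm_num : (0 : ℝ) < 1 / 2) (by norm_num)
  have hpow : ∀ x : ℝ, 0 ≤ x → (x ^ s) ^ (t / s) = x ^ t := fun x hx => by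
    rw [← rpow_mul hx, mul_div_cancel₀ _ hs.ne']
  simp only [smul_eq_mul, hpow a ha, hpow b hb] at hjensen
  have hlt : ((a ^ s + b ^ s) / 2) ^ (t / s) < (a ^ t + b ^ t) / 2 := by
    rw [show (a ^ s + b ^ s) / 2 = 1 / 2 * a ^ s + 1 / 2 * b ^ s by ring]
    linarith
  calc powerMean a b s = (((a ^ s + b ^ s) / 2) ^ (t / s)) ^ (1 / t) := by
        rw [powerMean, ← rpow_mul (by positivity)]
        field_simp
    _ < powerMean a b t := rpow_lt_rpow (by positivity) hlt (by positivity)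

lemma continuousOn_powerMean :
    ContinuousOn (powerMean a b) (Set.Ioi 0) := by
  intro q (hq : 0 < q)
  refine ContinuousAt.continuousWithinAt ?_
  exact (((continuousAt_const_rpow' hq.ne').add (continuousAt_const_rpow' hq.ne')).div_const 2).rpow
    (continuousAt_const.div continuousAt_id hq.ne') (Or.inr (by positivity))

lemma eventually_lt_powerMean (ha : 0 ≤ a) (hb : 0 ≤ b) {c : ℝ} (hc : c < b) :
    ∀ᶠ q in atTop, c < powerMean a b q := by
  have hlim : Tendsto (fun q : ℝ => b * 2 ^ (-(1 / q))) atTop (nhds b) := by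
    have h : Tendsto (fun q : ℝ => -(1 / q)) atTop (nhds 0) := by
      simpa using (tendsto_inv_atTop_zero (𝕜 := ℝ)).neg
    simpa using tendsto_const_nhds.mul
      ((continuousAt_const_rpow (by norm_num : (2 : ℝ) ≠ 0)).tendsto.comp h)
  filter_upwards [hlim.eventually (eventually_gt_nhds hc), eventually_gt_atTop 0]
    with q hcq hq
  calc c < b * 2 ^ (-(1 / q)) := hcq
    _ = (b ^ q / 2) ^ (1 / q) := by
      rw [div_rpow (by positivity) zero_le_two, ← rpow_mul hb, mul_one_div_cancel hq.ne',
        rpow_one, rpow_neg zero_le_two]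
      exact (div_eq_mul_inv _ _).symm
    _ ≤ powerMean a b q := by
      rw [powerMean]
      gcongr
      linarith [rpow_nonneg ha q]

lemma exists_powerMean_eq (ha : 0 ≤ a) (hb : 0 ≤ b) {p c : ℝ} (hp : 0 < p)
    (hpc : powerMean a b p < c) (hcb : c < b) : ∃ d, p < d ∧ powerMean a b d = c := by
  obtain ⟨q, hcq, hpq⟩ := ((eventually_lt_powerMean ha hb hcb).and (eventually_gt_atTop p)).exists
  obtain ⟨d, ⟨hpd, -⟩, hd⟩ := intermediate_value_Ioo hpq.le
    (continuousOn_powerMean.mono fun x hx => hp.trans_le hx.1) ⟨hpc, hcq⟩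
  exact ⟨d, hpd, hd⟩

end PowerMean

noncomputable def columnNorm (n : ℕ) (p : ℝ) (j : Fin n) : ℝ :=
  (∑ i : Fin n, |cauchyToeplitz n i j| ^ p) ^ (1 / p)

lemma columnNorm_nonneg (n : ℕ) (p : ℝ) (j : Fin n) : 0 ≤ columnNorm n p j :=
  rpow_nonneg (sum_nonneg fun _ _ => rpow_nonneg (abs_nonneg _) p) _

lemma columnNorm_rpow (n : ℕ) (p q : ℝ) (j : Fin n) :
    columnNorm n p j ^ q = (∑ i : Fin n, |cauchyToeplitz n i j| ^ p) ^ (q / p) := by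
  rw [columnNorm, ← rpow_mul (sum_nonneg fun _ _ => rpow_nonneg (abs_nonneg _) p),
    one_div_mul_eq_div]

lemma rpow_neg_inv_mul_lpqNorm_two (p q : ℝ) :
    (2 : ℝ) ^ (-(1 / q)) * lpqNorm 2 p q = powerMean (columnNorm 2 p 0) (columnNorm 2 p 1) q := by
  rw [lpqNorm, powerMean, Fin.sum_univ_two, ← columnNorm_rpow, ← columnNorm_rpow,
    div_rpow (add_nonneg (rpow_nonneg (columnNorm_nonneg 2 p 0) q)
      (rpow_nonneg (columnNorm_nonneg 2 p 1) q)) zero_le_two,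
    rpow_neg zero_le_two]
  ring

lemma sum_abs_cauchyToeplitz_two_zero (p : ℝ) :
    ∑ i : Fin 2, |cauchyToeplitz 2 i 0| ^ p = 2 ^ p * (1 + 3 ^ (-p)) := by
  norm_num [Fin.sum_univ_two, cauchyToeplitz, abs_div]
  rw [div_rpow zero_le_two zero_le_three, rpow_neg zero_le_three]
  field_simp

lemma sum_abs_cauchyToeplitz_two_one (p : ℝ) :
    ∑ i : Fin 2, |cauchyToeplitz 2 i 1| ^ p = 2 ^ p * 2 := by
  norm_num [Fin.sum_univ_two, cauchyToeplitz, abs_div]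
  ring

section CauchyToeplitzTwo

variable {p : ℝ}

lemma one_div_two_rpow_sub_one_nonneg (hp : 0 ≤ p) : (0 : ℝ) ≤ 1 / (2 ^ p - 1) := by
  have := one_le_rpow one_le_two hp
  positivity

lemma threshold_nonneg (hp : 0 ≤ p) : 0 ≤ (4 : ℝ) * (1 / (2 ^ p - 1)) ^ (1 / p) :=
  mul_nonneg zero_le_four (rpow_nonneg (one_div_two_rpow_sub_one_nonneg hp) _)

lemma threshold_rpow (hp : 0 ≤ p) (q : ℝ) :
    (4 * (1 / (2 ^ p - 1)) ^ (1 / p)) ^ q = (4 : ℝ) ^ q * (1 / (2 ^ p - 1)) ^ (q / p) := by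
  have hu := one_div_two_rpow_sub_one_nonneg hp
  rw [mul_rpow zero_le_four (rpow_nonneg hu _), ← rpow_mul hu, one_div_mul_eq_div]

lemma two_lt_two_rpow (hp : 1 < p) : (2 : ℝ) < 2 ^ p := by
  simpa using rpow_lt_rpow_of_exponent_lt one_lt_two hp

lemma columnNorm_two_zero_lt_one (hp : 0 < p) : columnNorm 2 p 0 < columnNorm 2 p 1 := by
  rw [← rpow_lt_rpow_iff (columnNorm_nonneg 2 p 0) (columnNorm_nonneg 2 p 1) hp,
    columnNorm_rpow, columnNorm_rpow, div_self hp.ne', rpow_one, rpow_one,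
    sum_abs_cauchyToeplitz_two_zero, sum_abs_cauchyToeplitz_two_one]
  have : (3 : ℝ) ^ (-p) < 1 := rpow_lt_one_of_one_lt_of_neg (by norm_num) (neg_lt_zero.2 hp)
  gcongr
  linarith

lemma threshold_lt_columnNorm_two_one (hp : 1 < p) :
    4 * (1 / (2 ^ p - 1)) ^ (1 / p) < columnNorm 2 p 1 := by
  have hp0 : 0 < p := zero_lt_one.trans hp
  rw [← rpow_lt_rpow_iff (threshold_nonneg hp0.le) (columnNorm_nonneg 2 p 1) hp0,
    threshold_rpow hp0.le, columnNorm_rpow, div_self hp0.ne', rpow_one, rpow_one,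
    sum_abs_cauchyToeplitz_two_one,
    show (4 : ℝ) = 2 * 2 by norm_num, mul_rpow zero_le_two zero_le_two]
  have hx := two_lt_two_rpow hp
  rw [mul_one_div, div_lt_iff₀ (by linarith)]
  nlinarith

lemma powerMean_columnNorm_two_self_lt (hp : 1 < p) (h : (2 : ℝ) ^ p + 6 ^ p < 3 ^ (p + 1) + 1) :
    powerMean (columnNorm 2 p 0) (columnNorm 2 p 1) p < 4 * (1 / (2 ^ p - 1)) ^ (1 / p) := by
  have hp0 : 0 < p := zero_lt_one.trans hp
  rw [← rpow_lt_rpow_iff (powerMean_nonneg (columnNorm_nonneg 2 p 0) (columnNorm_nonneg 2 p 1) p)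
    (threshold_nonneg hp0.le) hp0,
    powerMean_rpow_self (columnNorm_nonneg 2 p 0) (columnNorm_nonneg 2 p 1) hp0.ne',
    threshold_rpow hp0.le, columnNorm_rpow, columnNorm_rpow, div_self hp0.ne',
    rpow_one, rpow_one, rpow_one, sum_abs_cauchyToeplitz_two_zero, sum_abs_cauchyToeplitz_two_one,
    show (4 : ℝ) = 2 * 2 by norm_num, mul_rpow zero_le_two zero_le_two, rpow_neg zero_le_three]
  rw [show (6 : ℝ) = 2 * 3 by norm_num, mul_rpow zero_le_two zero_le_three,
    rpow_add_one three_ne_zero] at h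
  have hx := two_lt_two_rpow hp
  have hy : 0 < (3 : ℝ) ^ p := by positivity
  -- with `x = 2^p`, `y = 3^p` the goal is `(3y + 1)(x - 1) < 2xy`, i.e. `x + xy < 3y + 1`
  rw [mul_one_div, lt_div_iff₀ (by linarith)]
  field_simp
  nlinarith [mul_lt_mul_of_pos_left h (by linarith : (0 : ℝ) < 2 ^ p)]

lemma rpow_identity_of_powerMean_columnNorm_two_eq {d : ℝ} (hp : 0 < p) (hd : d ≠ 0)
    (h : powerMean (columnNorm 2 p 0) (columnNorm 2 p 1) d = 4 * (1 / (2 ^ p - 1)) ^ (1 / p)) :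
    (2 : ℝ) ^ (-p) * ((1 + (3 : ℝ) ^ (-p)) ^ (d / p) + 2 ^ (d / p)) ^ p =
      2 ^ (p * d) * (1 / (2 ^ p - 1)) ^ d := by
  have hmean := powerMean_rpow_self (columnNorm_nonneg 2 p 0) (columnNorm_nonneg 2 p 1) hd
  rw [h, threshold_rpow hp.le, columnNorm_rpow, columnNorm_rpow, sum_abs_cauchyToeplitz_two_zero,
    sum_abs_cauchyToeplitz_two_one, mul_rpow (by positivity) (by positivity),
    mul_rpow (by positivity) zero_le_two, ← rpow_mul zero_le_two, mul_div_cancel₀ _ hp.ne',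
    show (4 : ℝ) = 2 * 2 by norm_num, mul_rpow zero_le_two zero_le_two] at hmean
  set u : ℝ := 1 / (2 ^ p - 1)
  have hu : 0 ≤ u := one_div_two_rpow_sub_one_nonneg hp.le
  have hsum : (1 + (3 : ℝ) ^ (-p)) ^ (d / p) + 2 ^ (d / p) = 2 * 2 ^ d * u ^ (d / p) := by
    apply mul_left_cancel₀ (rpow_pos_of_pos two_pos d).ne'
    linear_combination -2 * hmean
  rw [hsum, mul_rpow (by positivity) (by positivity), mul_rpow zero_le_two (by positivity),
    ← rpow_mul zero_le_two, ← rpow_mul hu, div_mul_cancel₀ _ hp.ne', rpow_neg zero_le_two,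
    mul_comm d p]
  field_simp

end CauchyToeplitzTwo

theorem stmt_14 (p : ℝ) (hp : 1 < p) (h : (2 : ℝ) ^ p + 6 ^ p < 3 ^ (p + 1) + 1) :
    ∃ d : ℝ, p < d ∧
      (2 : ℝ) ^ (-(1 / d)) * lpqNorm 2 p d = 4 * (1 / (2 ^ p - 1)) ^ (1 / p) ∧
      (2 : ℝ) ^ (-p) * ((1 + (3 : ℝ) ^ (-p)) ^ (d / p) + 2 ^ (d / p)) ^ p =
        2 ^ (p * d) * (1 / (2 ^ p - 1)) ^ d ∧
      (∀ q : ℝ, p < q → q < d →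
        (2 : ℝ) ^ (-(1 / q)) * lpqNorm 2 p q < 4 * (1 / (2 ^ p - 1)) ^ (1 / p)) ∧
      (∀ q : ℝ, d ≤ q →
        4 * (1 / (2 ^ p - 1)) ^ (1 / p) ≤ (2 : ℝ) ^ (-(1 / q)) * lpqNorm 2 p q) ∧
      (∀ d' : ℝ, p < d' →
        (2 : ℝ) ^ (-(1 / d')) * lpqNorm 2 p d' = 4 * (1 / (2 ^ p - 1)) ^ (1 / p) →
        d' = d) := by
  have hp0 : 0 < p := zero_lt_one.trans hp
  simp only [rpow_neg_inv_mul_lpqNorm_two]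
  have hmono := powerMean_strictMonoOn (columnNorm_nonneg 2 p 0) (columnNorm_nonneg 2 p 1)
    (columnNorm_two_zero_lt_one hp0).ne
  obtain ⟨d, hpd, hd⟩ := exists_powerMean_eq (columnNorm_nonneg 2 p 0) (columnNorm_nonneg 2 p 1)
    hp0 (powerMean_columnNorm_two_self_lt hp h) (threshold_lt_columnNorm_two_one hp)
  have hd0 : 0 < d := hp0.trans hpd
  refine ⟨d, hpd, hd, rpow_identity_of_powerMean_columnNorm_two_eq hp0 hd0.ne' hd,
    fun q hpq hqd => hd ▸ hmono (hp0.trans hpq) hd0 hqd,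
    fun q hdq => hd ▸ hmono.monotoneOn hd0 (hd0.trans_le hdq) hdq,
    fun d' hpd' hd' => hmono.injOn (hp0.trans hpd') hd0 (hd'.trans hd.symm)⟩
end

section
/- For the ℓ_{1,1} norm one has n^{−1} ‖T_n‖_{1,1} < 6 for all 1 ≤ n ≤ 7, and n^{−1} ‖T_n‖_{1,1} > 6 for all n ≥ 8. (Here 6 = 4·(1/2 + 1/(2^1 − 1)).) -/
open Finset Real Filter

/-!
Summing the entries of `T_{n+1}` along its last row and column gives the recursion
`‖T_{n+1}‖_{1,1} = ‖T_n‖_{1,1} + 2 (O_n + O_{n+1})`, where `O_n = oddHarmonic n = ∑_{k<n} 1/(2k+1)`.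
Its solution is `‖T_n‖_{1,1} = n (4 O_n - 2)`. Hence `n⁻¹ ‖T_n‖_{1,1} < 6` exactly when `O_n < 2`,
and `O_n` increases through `2` between `n = 7` and `n = 8`.
-/

noncomputable def oddHarmonic (n : ℕ) : ℝ := ∑ k ∈ range n, (2 * (k : ℝ) + 1)⁻¹

lemma oddHarmonic_succ (n : ℕ) : oddHarmonic (n + 1) = oddHarmonic n + (2 * (n : ℝ) + 1)⁻¹ :=
  sum_range_succ _ _

lemma oddHarmonic_mono : Monotone oddHarmonic :=
  fun _ _ h => sum_le_sum_of_subset_of_nonneg (range_subset_range.2 h) fun _ _ _ => by positivity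

lemma oddHarmonic_seven_lt_two : oddHarmonic 7 < 2 := by
  norm_num [oddHarmonic, sum_range_succ]

lemma two_lt_oddHarmonic_eight : 2 < oddHarmonic 8 := by
  norm_num [oddHarmonic, sum_range_succ]

/-- `|T_n(i, j)|`, for indices read in `ℕ`. -/
noncomputable def absCauchyEntry (i j : ℕ) : ℝ := |2 / (1 + 2 * ((i : ℝ) - j))|

noncomputable def absCauchySum (n : ℕ) : ℝ := ∑ j ∈ range n, ∑ i ∈ range n, absCauchyEntry i j

lemma lpqNorm_one_one (n : ℕ) : lpqNorm n 1 1 = absCauchySum n := by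
  simp only [lpqNorm, cauchyToeplitz, absCauchySum, absCauchyEntry, rpow_one, div_one, sum_range]

lemma absCauchyEntry_of_le {i j : ℕ} (h : j ≤ i) :
    absCauchyEntry i j = 2 / (2 * ((i - j : ℕ) : ℝ) + 1) := by
  have hji : (j : ℝ) ≤ i := by exact_mod_cast h
  rw [absCauchyEntry, Nat.cast_sub h, abs_of_pos (div_pos two_pos (by linarith))]
  ring_nf

lemma absCauchyEntry_of_lt {i j : ℕ} (h : i < j) :
    absCauchyEntry i j = 2 / (2 * ((j - i - 1 : ℕ) : ℝ) + 1) := by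
  have hij : (i : ℝ) + 1 ≤ j := by exact_mod_cast h
  rw [absCauchyEntry, Nat.cast_sub (by omega), Nat.cast_sub h.le, abs_div, abs_two,
    abs_of_neg (by linarith : 1 + 2 * ((i : ℝ) - j) < 0)]
  ring_nf

lemma sum_absCauchyEntry_row (n : ℕ) :
    ∑ j ∈ range (n + 1), absCauchyEntry n j = 2 * oddHarmonic (n + 1) := by
  rw [← sum_range_reflect, oddHarmonic, mul_sum]
  refine sum_congr rfl fun k hk => ?_
  rw [absCauchyEntry_of_le (by omega), show n - (n + 1 - 1 - k) = k by grind, div_eq_mul_inv]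

lemma sum_absCauchyEntry_col (n : ℕ) :
    ∑ i ∈ range n, absCauchyEntry i n = 2 * oddHarmonic n := by
  rw [← sum_range_reflect, oddHarmonic, mul_sum]
  refine sum_congr rfl fun k hk => ?_
  rw [absCauchyEntry_of_lt (by grind), show n - (n - 1 - k) - 1 = k by grind, div_eq_mul_inv]

lemma absCauchySum_succ (n : ℕ) :
    absCauchySum (n + 1) = absCauchySum n + 2 * oddHarmonic n + 2 * oddHarmonic (n + 1) := by
  simp only [absCauchySum, sum_range_succ (fun i => absCauchyEntry i _), sum_add_distrib]
  rw [sum_range_succ (fun j => ∑ i ∈ range n, _), sum_absCauchyEntry_col, sum_absCauchyEntry_row]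

lemma absCauchySum_eq (n : ℕ) : absCauchySum n = n * (4 * oddHarmonic n - 2) := by
  induction n with
  | zero => simp [absCauchySum]
  | succ n ih =>
    rw [absCauchySum_succ, ih, oddHarmonic_succ]
    push_cast
    field_simp
    ring

theorem stmt_15 :
    (∀ n : ℕ, 1 ≤ n → n ≤ 7 → (n : ℝ)⁻¹ * lpqNorm n 1 1 < 6) ∧
    (∀ n : ℕ, 8 ≤ n → 6 < (n : ℝ)⁻¹ * lpqNorm n 1 1) := by
  have normalized (n : ℕ) (hn : 1 ≤ n) : (n : ℝ)⁻¹ * lpqNorm n 1 1 = 4 * oddHarmonic n - 2 := by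
    rw [lpqNorm_one_one, absCauchySum_eq, inv_mul_cancel_left₀ (by positivity)]
  refine ⟨fun n h1 h7 => ?_, fun n h8 => ?_⟩
  · linarith [normalized n h1, oddHarmonic_mono h7, oddHarmonic_seven_lt_two]
  · linarith [normalized n (by omega), oddHarmonic_mono h8, two_lt_oddHarmonic_eight]
end

section
/- Let p > 1 satisfy (1 − 2^{−p}) ζ(p) ≤ 2^{p−1} (1/2 + 1/(2^p − 1)). Then for every n ≥ 1 and every q with 1 ≤ q ≤ p, one has n^{−1/q} ‖T_n‖_{p,q} < 4 (1/2 + 1/(2^p − 1))^{1/p}. -/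
open Finset Real Filter

/-!
Every column of `T_n` consists of distinct entries `2 / (2k + 1)` with `k ∈ ℤ`, so its `ℓ_p^p` mass
is strictly below `∑_{k ∈ ℤ} |2 / (2k + 1)|^p = 2^(p+1) λ(p)`, where `λ(p) = (1 - 2^(-p)) ζ(p)` is
the sum of `1 / m^p` over odd `m`. The hypothesis says `2^(p+1) λ(p) ≤ 4^p c` with
`c = 1/2 + 1/(2^p - 1)`, and a matrix whose columns all have `ℓ_p^p` mass below `B` has
`‖·‖_{p,q} < n^(1/q) B^(1/p)` for every `q > 0`.
-/

noncomputable def dirichletLambda (p : ℝ) : ℝ := (1 - 2 ^ (-p)) * zetaR p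

lemma hasSum_one_div_nat_rpow_zetaR {p : ℝ} (hp : 1 < p) :
    HasSum (fun n : ℕ => 1 / (n : ℝ) ^ p) (zetaR p) := by
  have hζ : riemannZeta p = ∑' n : ℕ, 1 / (n : ℂ) ^ (p : ℂ) :=
    zeta_eq_tsum_one_div_nat_cpow (by simpa using hp)
  have hcast : ∀ n : ℕ, 1 / (n : ℂ) ^ (p : ℂ) = ((1 / (n : ℝ) ^ p : ℝ) : ℂ) := fun n => by
    rw [← Complex.ofReal_natCast, ← Complex.ofReal_cpow (Nat.cast_nonneg n)]
    push_cast
    ring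
  have hsum : zetaR p = ∑' n : ℕ, 1 / (n : ℝ) ^ p := by
    rw [zetaR, hζ]
    simp_rw [hcast, ← Complex.ofReal_tsum]
    exact Complex.ofReal_re _
  exact hsum ▸ (Real.summable_one_div_nat_rpow.mpr hp).hasSum

lemma hasSum_one_div_two_mul_add_one_rpow {p : ℝ} (hp : 1 < p) :
    HasSum (fun k : ℕ => 1 / (2 * (k : ℝ) + 1) ^ p) (dirichletLambda p) := by
  set f : ℕ → ℝ := fun n => 1 / (n : ℝ) ^ p
  have hf := hasSum_one_div_nat_rpow_zetaR hp
  have heven : HasSum (fun k => f (2 * k)) (2 ^ (-p) * zetaR p) := by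
    refine (hf.mul_left (2 ^ (-p))).congr_fun fun k => ?_
    show 1 / ((2 * k : ℕ) : ℝ) ^ p = _
    rw [Nat.cast_mul, Nat.cast_ofNat, Real.mul_rpow zero_le_two (Nat.cast_nonneg k),
      Real.rpow_neg zero_le_two]
    field_simp
  have hodd : HasSum (fun k => f (2 * k + 1)) (∑' k, f (2 * k + 1)) :=
    (hf.summable.comp_injective fun a b hab => by omega).hasSum
  have htotal : zetaR p = 2 ^ (-p) * zetaR p + ∑' k, f (2 * k + 1) :=
    hf.unique (heven.even_add_odd hodd)
  have hlambda : ∑' k, f (2 * k + 1) = dirichletLambda p := by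
    rw [dirichletLambda]
    linarith
  refine hlambda ▸ hodd.congr_fun fun k => ?_
  simp [f]

lemma hasSum_two_div_abs_two_mul_add_one_rpow {p : ℝ} (hp : 1 < p) :
    HasSum (fun k : ℤ => (2 / |2 * (k : ℝ) + 1|) ^ p) (2 ^ (p + 1) * dirichletLambda p) := by
  have hscaled := (hasSum_one_div_two_mul_add_one_rpow hp).mul_left (2 ^ p)
  have hterm : ∀ x : ℝ, 0 < x → (2 / x) ^ p = 2 ^ p * (1 / x ^ p) := fun x hx => by
    rw [Real.div_rpow zero_le_two hx.le, div_eq_mul_one_div]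
  have hnonneg : HasSum (fun m : ℕ => (2 / |2 * ((m : ℤ) : ℝ) + 1|) ^ p)
      (2 ^ p * dirichletLambda p) := by
    refine hscaled.congr_fun fun m => ?_
    rw [Int.cast_natCast, abs_of_pos (by positivity), hterm _ (by positivity)]
  have hneg : HasSum (fun m : ℕ => (2 / |2 * ((-(m + 1) : ℤ) : ℝ) + 1|) ^ p)
      (2 ^ p * dirichletLambda p) := by
    refine hscaled.congr_fun fun m => ?_
    have : 2 * ((-(m + 1) : ℤ) : ℝ) + 1 = -(2 * (m : ℝ) + 1) := by push_cast; ring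
    rw [this, abs_neg, abs_of_pos (by positivity), hterm _ (by positivity)]
  have htotal := HasSum.of_nat_of_neg_add_one (f := fun k : ℤ => (2 / |2 * (k : ℝ) + 1|) ^ p)
    hnonneg hneg
  convert htotal using 1
  rw [Real.rpow_add_one two_ne_zero]
  ring

lemma sum_lt_hasSum_of_pos {β : Type*} {f : β → ℝ} {a : ℝ} (hf : HasSum f a)
    (hpos : ∀ b, 0 < f b) {s : Finset β} {k : β} (hk : k ∉ s) : ∑ b ∈ s, f b < a := by
  classical
  calc ∑ b ∈ s, f b
      < f k + ∑ b ∈ s, f b := lt_add_of_pos_left _ (hpos k)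
    _ = ∑ b ∈ insert k s, f b := (sum_insert hk).symm
    _ ≤ a := sum_le_hasSum _ (fun b _ => (hpos b).le) hf

lemma sum_abs_cauchyToeplitz_rpow_lt {p : ℝ} (hp : 1 < p) {n : ℕ} (j : Fin n) :
    ∑ i, |cauchyToeplitz n i j| ^ p < 2 ^ (p + 1) * dirichletLambda p := by
  set F : ℤ → ℝ := fun k => (2 / |2 * (k : ℝ) + 1|) ^ p
  have hFpos : ∀ k, 0 < F k := fun k => by
    have : (2 * (k : ℝ) + 1) ≠ 0 := by
      exact_mod_cast (by omega : (2 * k + 1 : ℤ) ≠ 0)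
    positivity
  let shift : Fin n ↪ ℤ := ⟨fun i => (i : ℤ) - j, fun a b hab => Fin.ext (by simpa using hab)⟩
  have hentry : ∀ i : Fin n, |cauchyToeplitz n i j| ^ p = F ((i : ℤ) - j) := fun i => by
    simp only [F, cauchyToeplitz, abs_div, abs_two]
    push_cast
    ring_nf
  have hout : (n : ℤ) - j ∉ univ.map shift := by
    simp only [Finset.mem_map, not_exists, not_and]
    intro i _ hi
    change (i : ℤ) - j = n - j at hi
    omega
  calc ∑ i, |cauchyToeplitz n i j| ^ p = ∑ k ∈ univ.map shift, F k := by
        rw [sum_map]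
        exact sum_congr rfl fun i _ => hentry i
    _ < 2 ^ (p + 1) * dirichletLambda p :=
        sum_lt_hasSum_of_pos (hasSum_two_div_abs_two_mul_add_one_rpow hp) hFpos hout

lemma sum_rpow_div_rpow_one_div_lt_card_rpow_mul {ι : Type*} [Fintype ι] [Nonempty ι] {a : ι → ℝ}
    {B p q : ℝ} (hp : 0 < p) (hq : 0 < q) (ha : ∀ j, 0 ≤ a j) (haB : ∀ j, a j < B) :
    (∑ j, a j ^ (q / p)) ^ (1 / q) < (Fintype.card ι : ℝ) ^ (1 / q) * B ^ (1 / p) := by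
  have hB : 0 ≤ B := (ha (Classical.arbitrary ι)).trans (haB _).le
  have hsum : ∑ j, a j ^ (q / p) < Fintype.card ι * B ^ (q / p) := by
    calc ∑ j, a j ^ (q / p) < ∑ _j : ι, B ^ (q / p) :=
          sum_lt_sum_of_nonempty univ_nonempty fun j _ =>
            Real.rpow_lt_rpow (ha j) (haB j) (by positivity)
      _ = Fintype.card ι * B ^ (q / p) := by simp
  calc (∑ j, a j ^ (q / p)) ^ (1 / q)
      < (Fintype.card ι * B ^ (q / p)) ^ (1 / q) :=
        Real.rpow_lt_rpow (sum_nonneg fun j _ => Real.rpow_nonneg (ha j) _) hsum (by positivity)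
    _ = (Fintype.card ι : ℝ) ^ (1 / q) * B ^ (1 / p) := by
        rw [Real.mul_rpow (Nat.cast_nonneg _) (Real.rpow_nonneg hB _), ← Real.rpow_mul hB]
        field_simp

lemma lpqNorm_lt_of_forall_sum_col_lt {n : ℕ} (hn : 1 ≤ n) {p q B : ℝ} (hp : 0 < p) (hq : 0 < q)
    (hcol : ∀ j : Fin n, ∑ i, |cauchyToeplitz n i j| ^ p < B) :
    lpqNorm n p q < (n : ℝ) ^ (1 / q) * B ^ (1 / p) := by
  have : Nonempty (Fin n) := ⟨⟨0, hn⟩⟩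
  have := sum_rpow_div_rpow_one_div_lt_card_rpow_mul hp hq
    (fun j => sum_nonneg fun i _ => Real.rpow_nonneg (abs_nonneg (cauchyToeplitz n i j)) p) hcol
  rwa [Fintype.card_fin] at this

theorem stmt_16_general (p : ℝ) (hp : 1 < p)
    (h : (1 - 2 ^ (-p)) * zetaR p ≤ 2 ^ (p - 1) * (1 / 2 + 1 / (2 ^ p - 1)))
    (n : ℕ) (hn : 1 ≤ n) (q : ℝ) (hq1 : 1 ≤ q) :
    (n : ℝ) ^ (-(1 / q)) * lpqNorm n p q < 4 * (1 / 2 + 1 / (2 ^ p - 1)) ^ (1 / p) := by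
  set c : ℝ := 1 / 2 + 1 / (2 ^ p - 1)
  have hp0 : 0 < p := by linarith
  have hc : 0 < c := by
    have : (1 : ℝ) < 2 ^ p := Real.one_lt_rpow one_lt_two hp0
    have : (0 : ℝ) < 2 ^ p - 1 := by linarith
    positivity
  have hmass : 2 ^ (p + 1) * dirichletLambda p ≤ 4 ^ p * c :=
    calc 2 ^ (p + 1) * dirichletLambda p ≤ 2 ^ (p + 1) * (2 ^ (p - 1) * c) := by gcongr; exact h
      _ = 4 ^ p * c := by
        rw [← mul_assoc, ← Real.rpow_add two_pos, show (4 : ℝ) = 2 ^ (2 : ℝ) by norm_num,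
          ← Real.rpow_mul zero_le_two]
        ring_nf
  have hcol : ∀ j : Fin n, ∑ i, |cauchyToeplitz n i j| ^ p < 4 ^ p * c := fun j =>
    (sum_abs_cauchyToeplitz_rpow_lt hp j).trans_le hmass
  have hnorm : lpqNorm n p q < (n : ℝ) ^ (1 / q) * (4 ^ p * c) ^ (1 / p) :=
    lpqNorm_lt_of_forall_sum_col_lt hn hp0 (by linarith) hcol
  have hn0 : (0 : ℝ) < n := by exact_mod_cast hn
  calc (n : ℝ) ^ (-(1 / q)) * lpqNorm n p q
      < (n : ℝ) ^ (-(1 / q)) * ((n : ℝ) ^ (1 / q) * (4 ^ p * c) ^ (1 / p)) := by gcongr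
    _ = 4 * c ^ (1 / p) := by
      rw [← mul_assoc, ← Real.rpow_add hn0, neg_add_cancel, Real.rpow_zero, one_mul,
        Real.mul_rpow (by positivity) hc.le, ← Real.rpow_mul zero_le_four,
        mul_one_div_cancel hp0.ne', Real.rpow_one]

theorem stmt_16 (p : ℝ) (hp : 1 < p)
    (h : (1 - 2 ^ (-p)) * zetaR p ≤ 2 ^ (p - 1) * (1 / 2 + 1 / (2 ^ p - 1)))
    (n : ℕ) (hn : 1 ≤ n) (q : ℝ) (hq1 : 1 ≤ q) (hqp : q ≤ p) :
    (n : ℝ) ^ (-(1 / q)) * lpqNorm n p q < 4 * (1 / 2 + 1 / (2 ^ p - 1)) ^ (1 / p) :=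
  stmt_16_general p hp h n hn q hq1
end

section
/- For all p ≥ 1, one has 7^{−1/p} ‖T_7‖_p < 4 (1/2 + 1/(2^p − 1))^{1/p}; equivalently, 7·2^{p−1} + 7·2^p/(2^p − 1) − 13 − 11·3^{−p} − 9·5^{−p} − 7·7^{−p} − 5·9^{−p} − 3·11^{−p} − 13^{−p} > 0. -/
open Finset Real Filter

/-! Write `t = 2 ^ p` and `N p` for the bracket in `‖T_7‖_p ^ p = t * N p`. Both claims reduce to
`N p < 7 t / 2 + 7 t / (t - 1)`. Every `b ^ (-p)` is at most `b⁻¹`, so `N p ≤ N 1 = 131093 / 6435 ≈ 20.372`,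
while the right-hand side is at least `21 / 2 + 7 √2 ≈ 20.400` for every `t > 1`. -/

noncomputable def oddPowerSum (p : ℝ) : ℝ :=
  13 + 11 * (3 : ℝ) ^ (-p) + 9 * (5 : ℝ) ^ (-p) + 7 * (7 : ℝ) ^ (-p) + 5 * (9 : ℝ) ^ (-p)
    + 3 * (11 : ℝ) ^ (-p) + (13 : ℝ) ^ (-p)

theorem sum_abs_cauchyToeplitz_seven_rpow (p : ℝ) :
    ∑ i : Fin 7, ∑ j : Fin 7, |cauchyToeplitz 7 i j| ^ p = 2 ^ p * oddPowerSum p := by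
  simp only [cauchyToeplitz, oddPowerSum, Fin.sum_univ_seven]
  norm_num [abs_div, Real.div_rpow, Real.rpow_neg]
  ring

theorem lpNorm_seven (p : ℝ) : lpNorm 7 p = (2 ^ p * oddPowerSum p) ^ (1 / p) := by
  rw [lpNorm, sum_abs_cauchyToeplitz_seven_rpow]

theorem oddPowerSum_le_oddPowerSum_one {p : ℝ} (hp : 1 ≤ p) : oddPowerSum p ≤ oddPowerSum 1 := by
  unfold oddPowerSum
  gcongr <;> norm_num

theorem oddPowerSum_one_lt {t : ℝ} (ht : 1 < t) : oddPowerSum 1 < 7 * t / 2 + 7 * t / (t - 1) := by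
  have ht1 : 0 < t - 1 := by linarith
  have h : oddPowerSum 1 = 131093 / 6435 := by norm_num [oddPowerSum, Real.rpow_neg_one]
  rw [h, ← sub_lt_iff_lt_add', lt_div_iff₀ ht1]
  -- `217141 / 90090` is a rational approximation of the minimiser `1 + √2`
  nlinarith [sq_nonneg (t - 217141 / 90090)]

theorem oddPowerSum_lt {p : ℝ} (hp : 1 ≤ p) :
    oddPowerSum p < 7 * 2 ^ p / 2 + 7 * 2 ^ p / (2 ^ p - 1) :=
  (oddPowerSum_le_oddPowerSum_one hp).trans_lt
    (oddPowerSum_one_lt (one_lt_rpow one_lt_two (by linarith)))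

theorem stmt_17 (p : ℝ) (hp : 1 ≤ p) :
    (7 : ℝ) ^ (-(1 / p)) * lpNorm 7 p < 4 * (1 / 2 + 1 / (2 ^ p - 1)) ^ (1 / p) ∧
    0 < 7 * 2 ^ (p - 1) + 7 * 2 ^ p / (2 ^ p - 1) - 13 - 11 * (3 : ℝ) ^ (-p)
        - 9 * (5 : ℝ) ^ (-p) - 7 * (7 : ℝ) ^ (-p) - 5 * (9 : ℝ) ^ (-p)
        - 3 * (11 : ℝ) ^ (-p) - (13 : ℝ) ^ (-p) := by
  have hp0 : 0 < p := by linarith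
  have hN := oddPowerSum_lt hp
  have hN0 : 0 < oddPowerSum p := by unfold oddPowerSum; positivity
  set t : ℝ := 2 ^ p
  have ht : 0 < t - 1 := sub_pos.2 (one_lt_rpow one_lt_two hp0)
  have hhalf : (2 : ℝ) ^ (p - 1) = t / 2 := by rw [rpow_sub two_pos, rpow_one]
  refine ⟨?_, by rw [hhalf]; unfold oddPowerSum at hN; linarith⟩
  have hroot : t ^ (1 / p) = 2 := by rw [one_div]; exact rpow_rpow_inv zero_le_two hp0.ne'
  have hL : (7 : ℝ) ^ (-(1 / p)) * lpNorm 7 p = (7⁻¹ * (t * oddPowerSum p)) ^ (1 / p) := by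
    rw [lpNorm_seven, rpow_neg (by norm_num), ← inv_rpow (by norm_num),
      ← mul_rpow (by norm_num) (by positivity)]
  have hR : 4 * (1 / 2 + 1 / (t - 1)) ^ (1 / p) = (t * t * (1 / 2 + 1 / (t - 1))) ^ (1 / p) := by
    rw [mul_rpow (by positivity) (by positivity), mul_rpow (by positivity) (by positivity), hroot]
    norm_num
  rw [hL, hR, rpow_lt_rpow_iff (by positivity) (by positivity) (by positivity)]
  calc 7⁻¹ * (t * oddPowerSum p) < 7⁻¹ * (t * (7 * t / 2 + 7 * t / (t - 1))) := by gcongr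
    _ = t * t * (1 / 2 + 1 / (t - 1)) := by field_simp
end
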